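/- arXiv:2510.12805 — 8 statements merged into one kernel-verified Lean document; each statement's English description precedes it below -/
import Mathlib

section
/- Let (J,•) be a mock-Lie superalgebra over a field K of characteristic 0. Then for every homogeneous x ∈ J one has x•(x•x) = 0, and for all homogeneous x, y ∈ J the Jordan superalgebra identity (x•x)•(y•x) = ((x•x)•y)•x holds; in particular every mock-Lie superalgebra is a Jordan superalgebra. -/
/-- A mock-Lie superalgebra over `K`: a `ℤ/2`-graded vector space `J = J₀ ⊕ J₁`
with an even supercommutative bilinear product satisfying the super-Jacobi identity. -/
structure MockLieSuper (K : Type*) [Field K] (J : Type*) [AddCommGroup J] [Module K J] where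
  gr : ZMod 2 → Submodule K J
  compl : IsCompl (gr 0) (gr 1)
  mul : J →ₗ[K] J →ₗ[K] J
  mul_mem : ∀ i j : ZMod 2, ∀ x ∈ gr i, ∀ y ∈ gr j, mul x y ∈ gr (i + j)
  supercomm : ∀ i j : ZMod 2, ∀ x ∈ gr i, ∀ y ∈ gr j,
    mul x y = ((-1 : K) ^ (i.val * j.val)) • mul y x
  superJacobi : ∀ i j k : ZMod 2, ∀ x ∈ gr i, ∀ y ∈ gr j, ∀ z ∈ gr k,
    ((-1 : K) ^ (i.val * k.val)) • mul x (mul y z) +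
      ((-1 : K) ^ (i.val * j.val)) • mul y (mul z x) +
      ((-1 : K) ^ (j.val * k.val)) • mul z (mul x y) = 0

/-- Every mock-Lie superalgebra satisfies `x•(x•x) = 0` and the Jordan superalgebra
identity `(x•x)•(y•x) = ((x•x)•y)•x` for homogeneous `x, y`; in particular it is a
Jordan superalgebra. -/
theorem mockLieSuper_is_jordanSuper {K : Type*} [Field K] [CharZero K]
    {J : Type*} [AddCommGroup J] [Module K J] [FiniteDimensional K J]
    (M : MockLieSuper K J) :
    (∀ i : ZMod 2, ∀ x ∈ M.gr i, M.mul x (M.mul x x) = 0) ∧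
    (∀ i j : ZMod 2, ∀ x ∈ M.gr i, ∀ y ∈ M.gr j,
      M.mul (M.mul x x) (M.mul y x) = M.mul (M.mul (M.mul x x) y) x) := by
  have hodd : ∀ x ∈ M.gr 1, M.mul x x = 0 := by
    intro x hx
    have h := M.supercomm 1 1 x hx x hx
    have hval : ((1 : ZMod 2)).val = 1 := rfl
    rw [hval] at h
    simp only [mul_one, pow_one, neg_one_smul] at h
    have h2 : (2 : K) • M.mul x x = 0 := by
      rw [two_smul]
      nth_rewrite 1 [h]
      abel
    exact (smul_eq_zero.mp h2).resolve_left two_ne_zero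
  have hevencube : ∀ x ∈ M.gr 0, M.mul x (M.mul x x) = 0 := by
    intro x hx
    have h := M.superJacobi 0 0 0 x hx x hx x hx
    simp only [ZMod.val_zero, Nat.mul_zero, Nat.zero_mul, pow_zero, one_smul] at h
    have h3 : (3 : K) • M.mul x (M.mul x x) = 0 := by
      rw [show (3 : K) = 1 + 1 + 1 by norm_num, add_smul, add_smul]
      simp only [one_smul]
      exact h
    exact (smul_eq_zero.mp h3).resolve_left three_ne_zero
  constructor
  · intro i x hx
    fin_cases i
    · exact hevencube x hx
    · rw [hodd x hx]; simp
  · intro i j x hx y hy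
    fin_cases i
    · -- i = 0 case
      have ha : M.mul x x ∈ M.gr 0 := by simpa using M.mul_mem 0 0 x hx x hx
      have key : ∀ z ∈ M.gr j, M.mul (M.mul x x) z = (-2 : K) • M.mul x (M.mul x z) := by
        intro z hz
        have hJ := M.superJacobi 0 0 j x hx x hx z hz
        simp only [ZMod.val_zero, Nat.mul_zero, Nat.zero_mul, pow_zero, one_smul] at hJ
        have hzx : M.mul z x = M.mul x z := by
          simpa using M.supercomm j 0 z hz x hx
        have hza : M.mul z (M.mul x x) = M.mul (M.mul x x) z := by
          simpa using M.supercomm j 0 z hz (M.mul x x) ha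
        rw [hzx, hza] at hJ
        rw [eq_neg_of_add_eq_zero_right hJ, neg_smul, two_smul]
      have hyx : M.mul y x = M.mul x y := by
        simpa using M.supercomm j 0 y hy x hx
      have hxy : M.mul x y ∈ M.gr j := by simpa using M.mul_mem 0 j x hx y hy
      have hw : M.mul x (M.mul x y) ∈ M.gr j := by
        simpa using M.mul_mem 0 j x hx (M.mul x y) hxy
      have e2 : M.mul (M.mul x (M.mul x y)) x = M.mul x (M.mul x (M.mul x y)) := by
        simpa using M.supercomm j 0 (M.mul x (M.mul x y)) hw x hx
      have e3 : M.mul (M.mul (M.mul x x) y) x = M.mul (M.mul x x) (M.mul x y) := by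
        rw [key y hy, map_smul, LinearMap.smul_apply, e2, key (M.mul x y) hxy]
      rw [hyx, e3]
    · -- i = 1 case
      rw [hodd x hx]
      simp
end

section
/- Let (J,•) be a mock-Lie superalgebra over a field K of characteristic 0. Then for all homogeneous x, y ∈ J one has (x•x)•(y•x) = ((x•x)•y)•x = 0. -/
/-- In a mock-Lie superalgebra, `(x•x)•(y•x) = ((x•x)•y)•x = 0` for homogeneous `x, y`. -/
theorem mockLieSuper_sq_products_vanish {K : Type*} [Field K] [CharZero K]
    {J : Type*} [AddCommGroup J] [Module K J] [FiniteDimensional K J]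
    (M : MockLieSuper K J) :
    ∀ i j : ZMod 2, ∀ x ∈ M.gr i, ∀ y ∈ M.gr j,
      M.mul (M.mul x x) (M.mul y x) = 0 ∧ M.mul (M.mul (M.mul x x) y) x = 0 := by
  have smul_cancel : ∀ (c : K), c ≠ 0 → ∀ {v : J}, c • v = 0 → v = 0 := by
    intro c hc v h
    rcases smul_eq_zero.mp h with h | h
    · exact absurd h hc
    · exact h
  intro i j x hx y hy
  have hall : ∀ k : ZMod 2, k = 0 ∨ k = 1 := by decide
  rcases hall i with hi | hi
  · subst hi
    have ha : M.mul x x ∈ M.gr 0 := by simpa using M.mul_mem 0 0 x hx x hx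
    have hxy : M.mul x y ∈ M.gr j := by simpa using M.mul_mem 0 j x hx y hy
    have hay : M.mul (M.mul x x) y ∈ M.gr j := by
      simpa using M.mul_mem 0 j (M.mul x x) ha y hy
    -- key fact: (x•x)•z = -2 • (x•(x•z)) for homogeneous z
    have key : ∀ k : ZMod 2, ∀ z ∈ M.gr k,
        M.mul (M.mul x x) z = (-2 : K) • M.mul x (M.mul x z) := by
      intro k z hz
      have hj := M.superJacobi 0 0 k x hx x hx z hz
      have h1 := M.supercomm k 0 z hz x hx
      have h2 := M.supercomm k 0 z hz (M.mul x x) ha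
      simp only [ZMod.val_zero, Nat.zero_mul, Nat.mul_zero, pow_zero, one_smul] at hj h1 h2
      rw [h1, h2] at hj
      have h3 : M.mul (M.mul x x) z = -(M.mul x (M.mul x z) + M.mul x (M.mul x z)) :=
        eq_neg_of_add_eq_zero_right hj
      rw [h3, neg_smul, two_smul]
    -- (x•x)•x = 0
    have hax : M.mul (M.mul x x) x = 0 := by
      have h := key 0 x hx
      have hc := M.supercomm 0 0 (M.mul x x) ha x hx
      simp only [ZMod.val_zero, Nat.zero_mul, pow_zero, one_smul] at hc
      rw [← hc] at h
      have h3 : (1 - (-2) : K) • M.mul (M.mul x x) x = 0 := by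
        rw [sub_smul, one_smul, sub_eq_zero]; exact h
      exact smul_cancel (1 - (-2) : K) (by norm_num) h3
    -- show c := x•(x•(x•y)) = 0
    have hkey_xy := key j (M.mul x y) hxy
    have hkey_y := key j y hy
    have hj := M.superJacobi 0 j 0 x hx y hy (M.mul x x) ha
    simp only [ZMod.val_zero, Nat.zero_mul, Nat.mul_zero, pow_zero, one_smul] at hj
    have hya := M.supercomm j 0 y hy (M.mul x x) ha
    simp only [ZMod.val_zero, Nat.mul_zero, pow_zero, one_smul] at hya
    rw [hax, (M.mul y).map_zero, add_zero, hya, hkey_y, (M.mul x).map_smul,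
      hkey_xy] at hj
    have hc0 : M.mul x (M.mul x (M.mul x y)) = 0 := by
      have h4 : (-4 : K) • M.mul x (M.mul x (M.mul x y)) = 0 := by
        have : ((-2 : K) + (-2 : K)) • M.mul x (M.mul x (M.mul x y)) = 0 := by
          rw [add_smul]; exact hj
        norm_num at this
        simpa using this
      exact smul_cancel (-4 : K) (by norm_num) h4
    constructor
    · have hyx := M.supercomm j 0 y hy x hx
      simp only [ZMod.val_zero, Nat.mul_zero, pow_zero, one_smul] at hyx
      rw [hyx, hkey_xy, hc0, smul_zero]
    · have hcomm := M.supercomm j 0 (M.mul (M.mul x x) y) hay x hx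
      simp only [ZMod.val_zero, Nat.mul_zero, pow_zero, one_smul] at hcomm
      rw [hcomm, hkey_y, (M.mul x).map_smul, hc0, smul_zero]
  · subst hi
    have h := M.supercomm 1 1 x hx x hx
    have hv : ((1 : ZMod 2)).val = 1 := by decide
    rw [hv] at h
    simp only [Nat.mul_one, pow_one, neg_one_smul] at h
    have hsum : M.mul x x + M.mul x x = 0 := add_eq_zero_iff_eq_neg.mpr h
    have h2 : (2 : K) • M.mul x x = 0 := by rw [two_smul]; exact hsum
    have hxx : M.mul x x = 0 := smul_cancel (2 : K) (by norm_num) h2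
    constructor <;> simp [hxx]
end

section
/- Let (J,•) be a mock-Lie superalgebra over a field K of characteristic 0 and let (J*, L*) be its coadjoint representation. Let Ω : J × J → J* be a 2-cocycle of J on (J*, L*), and equip the T*-extension J ⊕ J* (with product (x+f) ⋆_Ω (y+g) = x•y + L*(x)(g) + (-1)^{|x||y|} L*(y)(f) + Ω(x,y)) with the even bilinear form B(x+f, y+g) = f(y) + (-1)^{|x||y|} g(x) for homogeneous x, y ∈ J, f, g ∈ J*. Then (J ⊕ J*, ⋆_Ω, B) is a pseudo-euclidean mock-Lie superalgebra if and only if B is non-degenerate and Ω satisfies Ω(x,y)(z) = (-1)^{|x|(|y|+|z|)} Ω(y,z)(x) for all homogeneous x, y, z ∈ J. -/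
/-- A pseudo-euclidean structure on a mock-Lie superalgebra: an even, supersymmetric,
non-degenerate and invariant bilinear form. -/
structure IsPseudoEuclidean {K : Type*} [Field K] {J : Type*} [AddCommGroup J] [Module K J]
    (M : MockLieSuper K J) (B : J →ₗ[K] J →ₗ[K] K) : Prop where
  even : ∀ i j : ZMod 2, i ≠ j → ∀ x ∈ M.gr i, ∀ y ∈ M.gr j, B x y = 0
  supersym : ∀ i j : ZMod 2, ∀ x ∈ M.gr i, ∀ y ∈ M.gr j,
    B x y = ((-1 : K) ^ (i.val * j.val)) * B y x
  nondeg : ∀ x : J, (∀ y : J, B x y = 0) → x = 0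
  invariant : ∀ x y z : J, B (M.mul x y) z = B x (M.mul y z)

private lemma zv0 : (0 : ZMod 2).val = 0 := rfl
private lemma zv1 : (1 : ZMod 2).val = 1 := rfl
private lemma z00 : (0 : ZMod 2) + 0 = 0 := rfl
private lemma z01 : (0 : ZMod 2) + 1 = 1 := rfl
private lemma z10 : (1 : ZMod 2) + 0 = 1 := rfl
private lemma z11 : (1 : ZMod 2) + 1 = 0 := rfl
private lemma ztwo (a : ZMod 2) : a = 0 ∨ a = 1 := by revert a; decide
set_option maxHeartbeats 2000000 in
/-- The `T*`-extension `J ⊕ J*` with the bilinear form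
`B(x+f, y+g) = f(y) + (-1)^{|x||y|} g(x)` is a pseudo-euclidean mock-Lie superalgebra
if and only if `B` is non-degenerate and `Ω` satisfies the cyclic condition
`Ω(x,y)(z) = (-1)^{|x|(|y|+|z|)} Ω(y,z)(x)`. -/
theorem Tstar_extension_pseudoEuclidean_iff {K : Type*} [Field K] [CharZero K]
    {J : Type*} [AddCommGroup J] [Module K J] [FiniteDimensional K J]
    (M : MockLieSuper K J)
    (Lstar : J →ₗ[K] Module.End K (Module.Dual K J))
    (hLstar : ∀ i p : ZMod 2, ∀ x ∈ M.gr i, ∀ f ∈ (M.gr (p + 1)).dualAnnihilator,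
      Lstar x f = ((-1 : K) ^ (p.val * i.val)) • (f ∘ₗ M.mul x))
    (Ω : J →ₗ[K] J →ₗ[K] Module.Dual K J)
    (hΩeven : ∀ i j : ZMod 2, ∀ x ∈ M.gr i, ∀ y ∈ M.gr j,
      Ω x y ∈ (M.gr (i + j + 1)).dualAnnihilator)
    (hΩsym : ∀ i j : ZMod 2, ∀ x ∈ M.gr i, ∀ y ∈ M.gr j,
      Ω x y = ((-1 : K) ^ (i.val * j.val)) • Ω y x)
    (hΩcocycle : ∀ i j k : ZMod 2, ∀ x ∈ M.gr i, ∀ y ∈ M.gr j, ∀ z ∈ M.gr k,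
      ((-1 : K) ^ (i.val * k.val)) • (Ω x (M.mul y z) + Lstar x (Ω y z)) +
        ((-1 : K) ^ (i.val * j.val)) • (Ω y (M.mul z x) + Lstar y (Ω z x)) +
        ((-1 : K) ^ (j.val * k.val)) • (Ω z (M.mul x y) + Lstar z (Ω x y)) = 0)
    (mul' : (J × Module.Dual K J) →ₗ[K] (J × Module.Dual K J) →ₗ[K] (J × Module.Dual K J))
    (hmul' : ∀ i j : ZMod 2, ∀ x ∈ M.gr i, ∀ f ∈ (M.gr (i + 1)).dualAnnihilator,
      ∀ y ∈ M.gr j, ∀ g ∈ (M.gr (j + 1)).dualAnnihilator,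
      mul' (x, f) (y, g) =
        (M.mul x y, Lstar x g + ((-1 : K) ^ (i.val * j.val)) • Lstar y f + Ω x y))
    (Bform : (J × Module.Dual K J) →ₗ[K] (J × Module.Dual K J) →ₗ[K] K)
    (hB : ∀ i j : ZMod 2, ∀ x ∈ M.gr i, ∀ f ∈ (M.gr (i + 1)).dualAnnihilator,
      ∀ y ∈ M.gr j, ∀ g ∈ (M.gr (j + 1)).dualAnnihilator,
      Bform (x, f) (y, g) = f y + ((-1 : K) ^ (i.val * j.val)) * g x) :
    (∃ N : MockLieSuper K (J × Module.Dual K J),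
        (∀ i : ZMod 2, N.gr i = (M.gr i).prod ((M.gr (i + 1)).dualAnnihilator)) ∧
        N.mul = mul' ∧ IsPseudoEuclidean N Bform) ↔
      ((∀ p : J × Module.Dual K J, (∀ q, Bform p q = 0) → p = 0) ∧
        (∀ i j k : ZMod 2, ∀ x ∈ M.gr i, ∀ y ∈ M.gr j, ∀ z ∈ M.gr k,
          Ω x y z = ((-1 : K) ^ (i.val * (j.val + k.val))) * Ω y z x)) := by
  have L2 : ∀ (q i : ZMod 2), ∀ x ∈ M.gr i, ∀ φ ∈ (M.gr (q + 1)).dualAnnihilator, ∀ w : J,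
      Lstar x φ w = (-1 : K) ^ (q.val * i.val) * φ (M.mul x w) := by
    intro q i x hx φ hφ w
    rw [hLstar i q x hx φ hφ]
    simp
  have memL : ∀ (q i : ZMod 2), ∀ x ∈ M.gr i, ∀ φ ∈ (M.gr (q + 1)).dualAnnihilator,
      Lstar x φ ∈ (M.gr (q + i + 1)).dualAnnihilator := by
    intro q i x hx φ hφ
    rw [Submodule.mem_dualAnnihilator]
    intro w hw
    rw [L2 q i x hx φ hφ w]
    have hm : M.mul x w ∈ M.gr (i + (q + i + 1)) := M.mul_mem _ _ x hx w hw
    have e : i + (q + i + 1) = q + 1 := by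
      rcases ztwo i with rfl | rfl <;> rcases ztwo q with rfl | rfl <;> decide
    rw [e] at hm
    rw [(Submodule.mem_dualAnnihilator _).mp hφ _ hm, mul_zero]
  have memD : ∀ (i j : ZMod 2), ∀ x ∈ M.gr i, ∀ f ∈ (M.gr (i + 1)).dualAnnihilator,
      ∀ y ∈ M.gr j, ∀ g ∈ (M.gr (j + 1)).dualAnnihilator,
      Lstar x g + ((-1 : K) ^ (i.val * j.val)) • Lstar y f + Ω x y
        ∈ (M.gr (i + j + 1)).dualAnnihilator := by
    intro i j x hx f hf y hy g hg
    refine Submodule.add_mem _ (Submodule.add_mem _ ?_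
      (Submodule.smul_mem _ _ (memL i j y hy f hf))) (hΩeven i j x hx y hy)
    have e : j + i + 1 = i + j + 1 := by rw [add_comm j i]
    exact e ▸ memL j i x hx g hg
  constructor
  · rintro ⟨N, hgr, hmulN, hPE⟩
    refine ⟨hPE.nondeg, ?_⟩
    intro i j k x hx y hy z hz
    have inv := hPE.invariant (x, 0) (y, 0) (z, 0)
    rw [hmulN] at inv
    rw [hmul' i j x hx 0 (Submodule.zero_mem _) y hy 0 (Submodule.zero_mem _),
        hmul' j k y hy 0 (Submodule.zero_mem _) z hz 0 (Submodule.zero_mem _)] at inv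
    simp only [map_zero, smul_zero, add_zero, zero_add] at inv
    rw [hB (i + j) k _ (M.mul_mem i j x hx y hy) _ (hΩeven i j x hx y hy)
          z hz 0 (Submodule.zero_mem _),
        hB i (j + k) x hx 0 (Submodule.zero_mem _) _ (M.mul_mem j k y hy z hz)
          _ (hΩeven j k y hy z hz)] at inv
    simp only [LinearMap.zero_apply, mul_zero, add_zero, zero_add] at inv
    rcases ztwo i with rfl | rfl <;> rcases ztwo j with rfl | rfl <;>
      rcases ztwo k with rfl | rfl <;>
      simp only [zv0, zv1, z00, z01, z10, z11] at inv ⊢ <;> linear_combination inv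
  · rintro ⟨hnd, hcyc⟩
    have hdec : ∀ w : J, ∃ a ∈ M.gr 0, ∃ b ∈ M.gr 1, a + b = w := by
      intro w
      have : w ∈ (⊤ : Submodule K J) := Submodule.mem_top
      rw [← codisjoint_iff.mp M.compl.codisjoint] at this
      exact Submodule.mem_sup.mp this
    have hext : ∀ φ : Module.Dual K J, (∀ m : ZMod 2, ∀ w ∈ M.gr m, φ w = 0) → φ = 0 := by
      intro φ h
      ext w
      obtain ⟨a, ha, b, hb, hab⟩ := hdec w
      rw [← hab]
      simp [h 0 a ha, h 1 b hb]
    have jacC : ∀ (j k m : ZMod 2), ∀ y ∈ M.gr j, ∀ z ∈ M.gr k, ∀ w ∈ M.gr m,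
        M.mul (M.mul y z) w + ((-1 : K) ^ (j.val * k.val)) • M.mul z (M.mul y w)
          + M.mul y (M.mul z w) = 0 := by
      intro j k m y hy z hz w hw
      have E := M.superJacobi j k m y hy z hz w hw
      rw [M.supercomm m j w hw y hy,
          M.supercomm m (j + k) w hw (M.mul y z) (M.mul_mem j k y hy z hz)] at E
      simp only [map_smul, smul_smul] at E
      rcases ztwo j with rfl | rfl <;> rcases ztwo k with rfl | rfl <;>
        rcases ztwo m with rfl | rfl <;>
        simp only [zv0, zv1, z00, z01, z10, z11] at E ⊢ <;>
        first
          | linear_combination (norm := module) E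
          | linear_combination (norm := module) -E
    have hDcompl : IsCompl ((M.gr (0 + 1)).dualAnnihilator)
        ((M.gr (1 + 1)).dualAnnihilator) := by
      rw [z01, z11]
      constructor
      · rw [disjoint_iff, ← Submodule.dualAnnihilator_sup_eq, sup_comm,
            codisjoint_iff.mp M.compl.codisjoint, Submodule.dualAnnihilator_top]
      · rw [codisjoint_iff, ← Subspace.dualAnnihilator_inf_eq, inf_comm,
            disjoint_iff.mp M.compl.disjoint, Submodule.dualAnnihilator_bot]
    have Ncompl : IsCompl ((M.gr 0).prod ((M.gr (0 + 1)).dualAnnihilator))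
        ((M.gr 1).prod ((M.gr (1 + 1)).dualAnnihilator)) := by
      constructor
      · rw [Submodule.disjoint_def]
        intro p h1 h2
        rw [Submodule.mem_prod] at h1 h2
        have e1 : p.1 = 0 := Submodule.disjoint_def.mp M.compl.disjoint p.1 h1.1 h2.1
        have e2 : p.2 = 0 := Submodule.disjoint_def.mp hDcompl.disjoint p.2 h1.2 h2.2
        exact Prod.ext_iff.mpr ⟨e1, e2⟩
      · rw [codisjoint_iff, eq_top_iff]
        rintro ⟨w, φ⟩ -
        obtain ⟨a, ha, b, hb, hab⟩ := hdec w
        have : φ ∈ (⊤ : Submodule K (Module.Dual K J)) := Submodule.mem_top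
        rw [← codisjoint_iff.mp hDcompl.codisjoint] at this
        obtain ⟨f, hf, g, hg, hfg⟩ := Submodule.mem_sup.mp this
        rw [Submodule.mem_sup]
        exact ⟨(a, f), Submodule.mem_prod.mpr ⟨ha, hf⟩, (b, g),
          Submodule.mem_prod.mpr ⟨hb, hg⟩, by rw [Prod.mk_add_mk, hab, hfg]⟩
    have Nmm : ∀ i j : ZMod 2, ∀ p ∈ (M.gr i).prod ((M.gr (i + 1)).dualAnnihilator),
        ∀ q ∈ (M.gr j).prod ((M.gr (j + 1)).dualAnnihilator),
        mul' p q ∈ (M.gr (i + j)).prod ((M.gr (i + j + 1)).dualAnnihilator) := by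
      intro i j p hp q hq
      obtain ⟨x, f⟩ := p; obtain ⟨y, g⟩ := q
      rw [Submodule.mem_prod] at hp hq
      rw [hmul' i j x hp.1 f hp.2 y hq.1 g hq.2]
      exact Submodule.mem_prod.mpr ⟨M.mul_mem i j x hp.1 y hq.1,
        memD i j x hp.1 f hp.2 y hq.1 g hq.2⟩
    have Nsc : ∀ i j : ZMod 2, ∀ p ∈ (M.gr i).prod ((M.gr (i + 1)).dualAnnihilator),
        ∀ q ∈ (M.gr j).prod ((M.gr (j + 1)).dualAnnihilator),
        mul' p q = ((-1 : K) ^ (i.val * j.val)) • mul' q p := by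
      intro i j p hp q hq
      obtain ⟨x, f⟩ := p; obtain ⟨y, g⟩ := q
      rw [Submodule.mem_prod] at hp hq
      rw [hmul' i j x hp.1 f hp.2 y hq.1 g hq.2, hmul' j i y hq.1 g hq.2 x hp.1 f hp.2]
      have hΩ := hΩsym i j x hp.1 y hq.1
      have hsc := M.supercomm i j x hp.1 y hq.1
      rw [Prod.smul_mk, Prod.mk.injEq]
      refine ⟨hsc, ?_⟩
      rcases ztwo i with rfl | rfl <;> rcases ztwo j with rfl | rfl <;>
        simp only [zv0, zv1] at hΩ ⊢ <;>
        linear_combination (norm := module) hΩ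
    have Nsj : ∀ i j k : ZMod 2, ∀ p ∈ (M.gr i).prod ((M.gr (i + 1)).dualAnnihilator),
        ∀ q ∈ (M.gr j).prod ((M.gr (j + 1)).dualAnnihilator),
        ∀ r ∈ (M.gr k).prod ((M.gr (k + 1)).dualAnnihilator),
        ((-1 : K) ^ (i.val * k.val)) • mul' p (mul' q r) +
          ((-1 : K) ^ (i.val * j.val)) • mul' q (mul' r p) +
          ((-1 : K) ^ (j.val * k.val)) • mul' r (mul' p q) = 0 := by
      intro i j k p hp q hq r hr
      obtain ⟨x, f⟩ := p; obtain ⟨y, g⟩ := q; obtain ⟨z, h⟩ := r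
      rw [Submodule.mem_prod] at hp hq hr
      obtain ⟨hx, hf⟩ := hp; obtain ⟨hy, hg⟩ := hq; obtain ⟨hz, hh⟩ := hr
      rw [hmul' j k y hy g hg z hz h hh,
          hmul' k i z hz h hh x hx f hf,
          hmul' i j x hx f hf y hy g hg,
          hmul' i (j + k) x hx f hf _ (M.mul_mem j k y hy z hz)
            _ (memD j k y hy g hg z hz h hh),
          hmul' j (k + i) y hy g hg _ (M.mul_mem k i z hz x hx)
            _ (memD k i z hz h hh x hx f hf),
          hmul' k (i + j) z hz h hh _ (M.mul_mem i j x hx y hy)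
            _ (memD i j x hx f hf y hy g hg)]
      rw [Prod.smul_mk, Prod.smul_mk, Prod.smul_mk, Prod.mk_add_mk, Prod.mk_add_mk,
        Prod.mk_eq_zero]
      refine ⟨M.superJacobi i j k x hx y hy z hz, ?_⟩
      apply hext
      intro m w hw
      simp only [LinearMap.add_apply, LinearMap.smul_apply, map_add, map_smul,
        smul_eq_mul, LinearMap.zero_apply]
      rw [L2 (k + j) i x hx _ (memL k j y hy h hh) w,
          L2 k j y hy h hh (M.mul x w),
          L2 (j + k) i x hx _ (memL j k z hz g hg) w,
          L2 j k z hz g hg (M.mul x w),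
          L2 (j + k) i x hx _ (hΩeven j k y hy z hz) w,
          L2 i (j + k) _ (M.mul_mem j k y hy z hz) f hf w,
          L2 (i + k) j y hy _ (memL i k z hz f hf) w,
          L2 i k z hz f hf (M.mul y w),
          L2 (k + i) j y hy _ (memL k i x hx h hh) w,
          L2 k i x hx h hh (M.mul y w),
          L2 (k + i) j y hy _ (hΩeven k i z hz x hx) w,
          L2 j (k + i) _ (M.mul_mem k i z hz x hx) g hg w,
          L2 (j + i) k z hz _ (memL j i x hx g hg) w,
          L2 j i x hx g hg (M.mul z w),
          L2 (i + j) k z hz _ (memL i j y hy f hf) w,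
          L2 i j y hy f hf (M.mul z w),
          L2 (i + j) k z hz _ (hΩeven i j x hx y hy) w,
          L2 k (i + j) _ (M.mul_mem i j x hx y hy) h hh w]
      have H1 := DFunLike.congr_fun (hΩcocycle i j k x hx y hy z hz) w
      simp only [LinearMap.add_apply, LinearMap.smul_apply, smul_eq_mul,
        LinearMap.zero_apply] at H1
      rw [L2 (j + k) i x hx _ (hΩeven j k y hy z hz) w,
          L2 (k + i) j y hy _ (hΩeven k i z hz x hx) w,
          L2 (i + j) k z hz _ (hΩeven i j x hx y hy) w] at H1
      have H2 := congrArg (fun v => f v) (jacC j k m y hy z hz w hw)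
      have H3 := congrArg (fun v => g v) (jacC k i m z hz x hx w hw)
      have H4 := congrArg (fun v => h v) (jacC i j m x hx y hy w hw)
      simp only [map_add, map_smul, map_zero, smul_eq_mul] at H2 H3 H4
      rcases ztwo i with rfl | rfl <;> rcases ztwo j with rfl | rfl <;>
        rcases ztwo k with rfl | rfl <;>
        simp only [zv0, zv1, z00, z01, z10, z11] at H1 H2 H3 H4 ⊢ <;>
        first
          | linear_combination H1 + H2 + H3 + H4
          | linear_combination H1 + H2 + H3 - H4
          | linear_combination H1 + H2 - H3 + H4
          | linear_combination H1 - H2 + H3 + H4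
          | linear_combination H1 + H2 - H3 - H4
          | linear_combination H1 - H2 + H3 - H4
          | linear_combination H1 - H2 - H3 + H4
          | linear_combination H1 - H2 - H3 - H4
    have key : ∀ i j k : ZMod 2, ∀ p ∈ (M.gr i).prod ((M.gr (i + 1)).dualAnnihilator),
        ∀ q ∈ (M.gr j).prod ((M.gr (j + 1)).dualAnnihilator),
        ∀ r ∈ (M.gr k).prod ((M.gr (k + 1)).dualAnnihilator),
        Bform (mul' p q) r = Bform p (mul' q r) := by
      intro i j k p hp q hq r hr
      obtain ⟨x, f⟩ := p; obtain ⟨y, g⟩ := q; obtain ⟨z, h⟩ := r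
      rw [Submodule.mem_prod] at hp hq hr
      obtain ⟨hx, hf⟩ := hp; obtain ⟨hy, hg⟩ := hq; obtain ⟨hz, hh⟩ := hr
      rw [hmul' i j x hx f hf y hy g hg, hmul' j k y hy g hg z hz h hh,
          hB (i + j) k _ (M.mul_mem i j x hx y hy) _ (memD i j x hx f hf y hy g hg)
            z hz h hh,
          hB i (j + k) x hx f hf _ (M.mul_mem j k y hy z hz)
            _ (memD j k y hy g hg z hz h hh)]
      simp only [LinearMap.add_apply, LinearMap.smul_apply, smul_eq_mul]
      rw [L2 j i x hx g hg z, L2 i j y hy f hf z, L2 k j y hy h hh x,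
          L2 j k z hz g hg x]
      have s1 : h (M.mul y x) = ((-1 : K) ^ (j.val * i.val)) * h (M.mul x y) := by
        rw [M.supercomm j i y hy x hx, map_smul, smul_eq_mul]
      have s2 : g (M.mul z x) = ((-1 : K) ^ (k.val * i.val)) * g (M.mul x z) := by
        rw [M.supercomm k i z hz x hx, map_smul, smul_eq_mul]
      have hc := hcyc i j k x hx y hy z hz
      rcases ztwo i with rfl | rfl <;> rcases ztwo j with rfl | rfl <;>
        rcases ztwo k with rfl | rfl <;>
        simp only [zv0, zv1, z00, z01, z10, z11] at s1 s2 hc ⊢ <;>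
        first
          | linear_combination hc + s1 + s2
          | linear_combination hc + s1 - s2
          | linear_combination hc - s1 + s2
          | linear_combination hc - s1 - s2
          | linear_combination hc
          | linear_combination hc + s1
          | linear_combination hc - s1
          | linear_combination hc + s2
          | linear_combination hc - s2
    refine ⟨⟨fun i => (M.gr i).prod ((M.gr (i + 1)).dualAnnihilator),
      Ncompl, mul', Nmm, Nsc, Nsj⟩, fun i => rfl, rfl, ?_, ?_, hnd, ?_⟩
    · -- even
      intro i j hij p hp q hq
      obtain ⟨x, f⟩ := p; obtain ⟨y, g⟩ := q
      have hp' := Submodule.mem_prod.mp hp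
      have hq' := Submodule.mem_prod.mp hq
      have hji : j = i + 1 := by
        revert hij; rcases ztwo i with rfl | rfl <;> rcases ztwo j with rfl | rfl <;> decide
      have hij' : i = j + 1 := by
        revert hij; rcases ztwo i with rfl | rfl <;> rcases ztwo j with rfl | rfl <;> decide
      rw [hB i j x hp'.1 f hp'.2 y hq'.1 g hq'.2]
      rw [(Submodule.mem_dualAnnihilator _).mp hp'.2 y (hji ▸ hq'.1),
        (Submodule.mem_dualAnnihilator _).mp hq'.2 x (hij' ▸ hp'.1)]
      try ring
    · -- supersym
      intro i j p hp q hq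
      obtain ⟨x, f⟩ := p; obtain ⟨y, g⟩ := q
      have hp' := Submodule.mem_prod.mp hp
      have hq' := Submodule.mem_prod.mp hq
      rw [hB i j x hp'.1 f hp'.2 y hq'.1 g hq'.2,
        hB j i y hq'.1 g hq'.2 x hp'.1 f hp'.2]
      rcases ztwo i with rfl | rfl <;> rcases ztwo j with rfl | rfl <;>
        simp only [zv0, zv1] <;> ring
    · -- invariant
      intro p q r
      have pdec : ∀ p : J × Module.Dual K J,
          ∃ a ∈ (M.gr 0).prod ((M.gr (0 + 1)).dualAnnihilator),
          ∃ b ∈ (M.gr 1).prod ((M.gr (1 + 1)).dualAnnihilator), a + b = p := by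
        intro p
        have : p ∈ (⊤ : Submodule K (J × Module.Dual K J)) := Submodule.mem_top
        rw [← codisjoint_iff.mp Ncompl.codisjoint] at this
        exact Submodule.mem_sup.mp this
      obtain ⟨pa, hpa, pb, hpb, hp⟩ := pdec p
      obtain ⟨qa, hqa, qb, hqb, hq⟩ := pdec q
      obtain ⟨ra, hra, rb, hrb, hr⟩ := pdec r
      subst hp hq hr
      simp only [map_add, LinearMap.add_apply]
      rw [key 0 0 0 pa hpa qa hqa ra hra, key 0 0 1 pa hpa qa hqa rb hrb,
          key 0 1 0 pa hpa qb hqb ra hra, key 0 1 1 pa hpa qb hqb rb hrb,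
          key 1 0 0 pb hpb qa hqa ra hra, key 1 0 1 pb hpb qa hqa rb hrb,
          key 1 1 0 pb hpb qb hqb ra hra, key 1 1 1 pb hpb qb hqb rb hrb]
      try ring
end

section
/- Let (J,•,B) be a pseudo-euclidean mock-Lie superalgebra over a field K of characteristic 0. Then F = {x ∈ J₁ : x•z = 0 for all z ∈ J₁} is contained in the annihilator Ann(J) = {x ∈ J : x•y = 0 for all y ∈ J}. -/
/-- In a pseudo-euclidean mock-Lie superalgebra, every odd element annihilating the
odd part lies in the annihilator of the whole algebra. -/
theorem odd_annihilating_odd_mem_ann {K : Type*} [Field K] [CharZero K]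
    {J : Type*} [AddCommGroup J] [Module K J] [FiniteDimensional K J]
    (M : MockLieSuper K J) (B : J →ₗ[K] J →ₗ[K] K)
    (hPE : IsPseudoEuclidean M B) :
    ∀ x ∈ M.gr 1, (∀ z ∈ M.gr 1, M.mul x z = 0) → ∀ y : J, M.mul x y = 0 := by
  intro x hx hz y
  -- key: for even y₀, mul x y₀ = 0
  have key : ∀ y₀ ∈ M.gr 0, M.mul x y₀ = 0 := by
    intro y₀ hy₀
    apply hPE.nondeg
    intro w
    obtain ⟨w₀, w₁, hw₀, hw₁, hw⟩ :=
      Submodule.codisjoint_iff_exists_add_eq.mp M.compl.codisjoint w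
    have hxy : M.mul x y₀ ∈ M.gr 1 := by
      have := M.mul_mem 1 0 x hx y₀ hy₀
      simpa using this
    have h0 : B (M.mul x y₀) w₀ = 0 :=
      hPE.even 1 0 (by decide) _ hxy _ hw₀
    have h1 : B (M.mul x y₀) w₁ = 0 := by
      have hmul0 : M.mul w₁ x = 0 := by
        have hc := M.supercomm 1 1 x hx w₁ hw₁
        have hx0 : M.mul x w₁ = 0 := hz w₁ hw₁
        have : (0 : J) = ((-1 : K) ^ ((1 : ZMod 2).val * (1 : ZMod 2).val)) • M.mul w₁ x := by
          rw [← hx0]; exact hc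
        have h2 : M.mul w₁ x = ((-1 : K) ^ ((1 : ZMod 2).val * (1 : ZMod 2).val)) • (0 : J) := by
          have hc' := M.supercomm 1 1 w₁ hw₁ x hx
          rw [hc', hx0]
        simpa using h2
      calc B (M.mul x y₀) w₁ = B x (M.mul y₀ w₁) := hPE.invariant x y₀ w₁
        _ = ((-1 : K) ^ ((1 : ZMod 2).val * ((0 : ZMod 2) + 1).val)) * B (M.mul y₀ w₁) x := by
            exact hPE.supersym 1 (0 + 1) x hx _ (M.mul_mem 0 1 y₀ hy₀ w₁ hw₁)
        _ = ((-1 : K) ^ ((1 : ZMod 2).val * ((0 : ZMod 2) + 1).val)) * B y₀ (M.mul w₁ x) := by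
            rw [hPE.invariant]
        _ = 0 := by rw [hmul0]; simp
    rw [← hw]
    simp [h0, h1]
  obtain ⟨y₀, y₁, hy₀, hy₁, hy⟩ :=
    Submodule.codisjoint_iff_exists_add_eq.mp M.compl.codisjoint y
  rw [← hy]
  simp [key y₀ hy₀, hz y₁ hy₁]
end

section
/- Let (J = J₀ ⊕ J₁, •, B) be a finite-dimensional pseudo-euclidean mock-Lie superalgebra over a field K of characteristic 0 with J₁ ≠ {0}. Then Ann(J) ∩ J₁ ≠ {0}, i.e. there exists a non-zero odd element x ∈ J₁ with x•y = 0 for all y ∈ J. -/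
universe u

/-- Engel-type theorem for "mock-Lie representations": if `g` is a finite-dimensional
commutative algebra satisfying `a(bc) + b(ac) + (ab)c = 0`, and `ρ` is a representation
with `ρ a ∘ ρ b + ρ b ∘ ρ a = -ρ (ab)`, then there is a common kernel vector. -/
theorem mockEngel {K : Type*} [Field K] [CharZero K] :
    ∀ (n : ℕ) (g : Type u) [AddCommGroup g] [Module K g] [FiniteDimensional K g],
      Module.finrank K g ≤ n →
      ∀ (V : Type u) [AddCommGroup V] [Module K V] [Nontrivial V]
        (μ : g →ₗ[K] g →ₗ[K] g) (ρ : g →ₗ[K] V →ₗ[K] V),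
        (∀ a b : g, μ a b = μ b a) →
        (∀ a b c : g, μ a (μ b c) + μ b (μ a c) + μ (μ a b) c = 0) →
        (∀ (a b : g) (v : V), ρ a (ρ b v) + ρ b (ρ a v) + ρ (μ a b) v = 0) →
        ∃ v : V, v ≠ 0 ∧ ∀ a : g, ρ a v = 0 := by
  intro n
  induction n with
  | zero =>
    intro g _ _ _ hrank V _ _ _ μ ρ hcomm hjac hrel
    have hsub : Subsingleton g := by
      have h0 : Module.finrank K g = 0 := le_antisymm hrank (Nat.zero_le _)
      exact Module.finrank_zero_iff.mp h0
    obtain ⟨v, hv⟩ := exists_ne (0 : V)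
    refine ⟨v, hv, fun a => ?_⟩
    rw [Subsingleton.elim a 0]
    simp
  | succ n IH =>
    intro g _ _ _ hrank V _ _ _ μ ρ hcomm hjac hrel
    by_cases hg : Subsingleton g
    · obtain ⟨v, hv⟩ := exists_ne (0 : V)
      refine ⟨v, hv, fun a => ?_⟩
      rw [Subsingleton.elim a 0]
      simp
    have hnt : Nontrivial g := not_subsingleton_iff_nontrivial.mp hg
    -- basic consequences of the axioms
    have haa : ∀ a : g, μ a (μ a a) = 0 := by
      intro a
      have h0 := hjac a a a
      rw [hcomm (μ a a) a] at h0
      have h3 : (3 : K) • μ a (μ a a) = 0 := by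
        rw [show (3 : K) = 1 + 1 + 1 by norm_num, add_smul, add_smul, one_smul]
        exact h0
      exact (smul_eq_zero.mp h3).resolve_left (by norm_num)
    have hσσgen : ∀ a : g, μ (μ a a) (μ a a) = 0 := by
      intro a
      have h0 := hjac a a (μ a a)
      rw [haa a, map_zero] at h0
      simpa using h0
    have hsq : ∀ (a : g) (v : V), ρ a (ρ a v) = -((2 : K)⁻¹ • ρ (μ a a) v) := by
      intro a v
      have h0 := hrel a a v
      have h2 : (2 : K) • ρ a (ρ a v) = -(ρ (μ a a) v) := by
        rw [two_smul]
        exact eq_neg_of_add_eq_zero_left h0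
      calc ρ a (ρ a v) = (2 : K)⁻¹ • ((2 : K) • ρ a (ρ a v)) := by
            rw [inv_smul_smul₀ (two_ne_zero)]
        _ = -((2 : K)⁻¹ • ρ (μ a a) v) := by rw [h2, smul_neg]
    have h4 : ∀ (a : g) (v : V), ρ a (ρ a (ρ a (ρ a v))) = 0 := by
      intro a v
      have hz : ρ (μ a a) (ρ (μ a a) v) = 0 := by
        rw [hsq (μ a a) v, hσσgen a, map_zero]
        simp
      rw [hsq a (ρ a (ρ a v)), hsq a v]
      simp [map_neg, map_smul, hz]
    -- choose a maximal proper subalgebra h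
    obtain ⟨h, ⟨hA, hne⟩, hmax⟩ :=
      (wellFounded_gt (α := Submodule K g)).has_min
        {p : Submodule K g | (∀ a ∈ p, ∀ b ∈ p, μ a b ∈ p) ∧ p ≠ ⊤}
        ⟨⊥, fun a ha b hb => by
            simp only [Submodule.mem_bot] at ha ⊢
            subst ha; simp, bot_ne_top⟩
    have hmaxtop : ∀ p : Submodule K g, (∀ a ∈ p, ∀ b ∈ p, μ a b ∈ p) → h < p → p = ⊤ := by
      intro p hp hlt
      by_contra hne'
      exact hmax p ⟨hp, hne'⟩ hlt
    have hlt_top : h < ⊤ := hne.lt_top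
    have hrank' : Module.finrank K ↥h ≤ n := by
      have hlt := Submodule.finrank_lt (K := K) (V := g) hlt_top.ne
      omega
    -- the restricted product on h
    let μh : h →ₗ[K] h →ₗ[K] h :=
      LinearMap.mk₂ K (fun a b => ⟨μ a b, hA a a.2 b b.2⟩)
        (fun a a' b => Subtype.ext (by simp))
        (fun c a b => Subtype.ext (by simp))
        (fun a b b' => Subtype.ext (by simp))
        (fun c a b => Subtype.ext (by simp))
    have hμh : ∀ a b : h, (μh a b : g) = μ a b := fun a b => rfl
    have hcommh : ∀ a b : h, μh a b = μh b a := fun a b => Subtype.ext (hcomm a b)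
    have hjach : ∀ a b c : h, μh a (μh b c) + μh b (μh a c) + μh (μh a b) c = 0 := by
      intro a b c
      apply Subtype.ext
      simpa [hμh] using hjac (a : g) b c
    -- the adjoint representation of h on g ⧸ h
    have hmapsto : ∀ t : h, h ≤ h.comap (μ (t : g)) :=
      fun t x hx => Submodule.mem_comap.mpr (hA t t.2 x hx)
    let ad : h →ₗ[K] (g ⧸ h) →ₗ[K] (g ⧸ h) :=
      { toFun := fun t => Submodule.mapQ h h (μ (t : g)) (hmapsto t)
        map_add' := fun t u => by
          apply LinearMap.ext
          intro x
          obtain ⟨y, rfl⟩ := Submodule.Quotient.mk_surjective h x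
          simp [Submodule.mapQ_apply, map_add]
        map_smul' := fun c t => by
          apply LinearMap.ext
          intro x
          obtain ⟨y, rfl⟩ := Submodule.Quotient.mk_surjective h x
          simp [Submodule.mapQ_apply, map_smul] }
    have had : ∀ (t : h) (x : g),
        ad t (Submodule.Quotient.mk x) = Submodule.Quotient.mk (μ (t : g) x) :=
      fun t x => rfl
    have hrelad : ∀ (t u : h) (x : g ⧸ h),
        ad t (ad u x) + ad u (ad t x) + ad (μh t u) x = 0 := by
      intro t u x
      obtain ⟨y, rfl⟩ := Submodule.Quotient.mk_surjective h x
      rw [had u y, had t y, had t (μ (u : g) y), had u (μ (t : g) y), had (μh t u) y, hμh]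
      rw [← Submodule.Quotient.mk_add, ← Submodule.Quotient.mk_add, hjac (t : g) u y,
        Submodule.Quotient.mk_zero]
    haveI : Nontrivial (g ⧸ h) := Submodule.Quotient.nontrivial_iff.mpr hlt_top.ne
    obtain ⟨sbar, hsne, hskill⟩ := IH ↥h hrank' (g ⧸ h) μh ad hcommh hjach hrelad
    obtain ⟨s, rfl⟩ := Submodule.Quotient.mk_surjective h sbar
    have hsnotin : s ∉ h := fun hs => hsne ((Submodule.Quotient.mk_eq_zero h).mpr hs)
    have hts : ∀ t ∈ h, μ t s ∈ h := by
      intro t ht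
      have h0 : (Submodule.Quotient.mk (μ t s) : g ⧸ h) = 0 := by
        rw [← had ⟨t, ht⟩ s]
        exact hskill ⟨t, ht⟩
      exact (Submodule.Quotient.mk_eq_zero h).mp h0
    set σ := μ s s with hσdef
    have hsσ : μ s σ = 0 := haa s
    have hσs : μ σ s = 0 := by rw [hcomm]; exact hsσ
    have hσσ : μ σ σ = 0 := hσσgen s
    have htσ : ∀ t ∈ h, μ t σ ∈ h := by
      intro t ht
      have h0 : μ t σ + (μ s (μ t s) + μ (μ t s) s) = 0 := by
        rw [← add_assoc]
        exact hjac t s s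
      have h1 : μ t σ = -(μ s (μ t s) + μ (μ t s) s) := eq_neg_of_add_eq_zero_left h0
      have m2 : μ (μ t s) s ∈ h := hts _ (hts t ht)
      have m1 : μ s (μ t s) ∈ h := by rw [hcomm]; exact m2
      rw [h1]
      exact neg_mem (add_mem m1 m2)
    -- h together with s and σ is a subalgebra, hence everything
    have hsmem : s ∈ h ⊔ Submodule.span K {s, σ} :=
      Submodule.mem_sup_right (Submodule.subset_span (by simp))
    have hσmem : σ ∈ h ⊔ Submodule.span K {s, σ} :=
      Submodule.mem_sup_right (Submodule.subset_span (by simp))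
    have hGt : ∀ t ∈ h, ∀ y ∈ h ⊔ Submodule.span K {s, σ},
        μ t y ∈ h ⊔ Submodule.span K {s, σ} := by
      intro t ht y hy
      obtain ⟨ty, hty, wy, hwy, rfl⟩ := Submodule.mem_sup.mp hy
      obtain ⟨ay, by', rfl⟩ := Submodule.mem_span_pair.mp hwy
      simp only [map_add, map_smul]
      refine Submodule.mem_sup_left (add_mem (hA t ht ty hty) (add_mem ?_ ?_))
      · exact Submodule.smul_mem _ _ (hts t ht)
      · exact Submodule.smul_mem _ _ (htσ t ht)
    have hGs : ∀ y ∈ h ⊔ Submodule.span K {s, σ},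
        μ s y ∈ h ⊔ Submodule.span K {s, σ} := by
      intro y hy
      obtain ⟨ty, hty, wy, hwy, rfl⟩ := Submodule.mem_sup.mp hy
      obtain ⟨ay, by', rfl⟩ := Submodule.mem_span_pair.mp hwy
      simp only [map_add, map_smul, hsσ, smul_zero, add_zero]
      refine add_mem ?_ (Submodule.smul_mem _ _ hσmem)
      refine Submodule.mem_sup_left ?_
      rw [hcomm]
      exact hts ty hty
    have hGσ : ∀ y ∈ h ⊔ Submodule.span K {s, σ},
        μ σ y ∈ h ⊔ Submodule.span K {s, σ} := by
      intro y hy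
      obtain ⟨ty, hty, wy, hwy, rfl⟩ := Submodule.mem_sup.mp hy
      obtain ⟨ay, by', rfl⟩ := Submodule.mem_span_pair.mp hwy
      simp only [map_add, map_smul, hσs, hσσ, smul_zero, add_zero]
      refine Submodule.mem_sup_left ?_
      rw [hcomm]
      exact htσ ty hty
    have hGsub : ∀ x ∈ h ⊔ Submodule.span K {s, σ}, ∀ y ∈ h ⊔ Submodule.span K {s, σ},
        μ x y ∈ h ⊔ Submodule.span K {s, σ} := by
      intro x hx y hy
      obtain ⟨tx, htx, wx, hwx, rfl⟩ := Submodule.mem_sup.mp hx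
      obtain ⟨ax, bx, rfl⟩ := Submodule.mem_span_pair.mp hwx
      simp only [map_add, map_smul, LinearMap.add_apply, LinearMap.smul_apply]
      refine add_mem (hGt tx htx y hy) (add_mem ?_ ?_)
      · exact Submodule.smul_mem _ _ (hGs y hy)
      · exact Submodule.smul_mem _ _ (hGσ y hy)
    have hlt' : h < h ⊔ Submodule.span K {s, σ} := by
      refine lt_of_le_of_ne le_sup_left ?_
      intro heq
      exact hsnotin (by rw [heq]; exact hsmem)
    have htop : h ⊔ Submodule.span K {s, σ} = ⊤ := hmaxtop _ hGsub hlt'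
    -- the representation of h on V
    let ρh : h →ₗ[K] V →ₗ[K] V := ρ ∘ₗ h.subtype
    obtain ⟨w, hwne, hwkill⟩ := IH ↥h hrank' V μh ρh hcommh hjach
      (fun a b v => hrel (a : g) b v)
    have hPw : ∀ t ∈ h, ρ t w = 0 := fun t ht => hwkill ⟨t, ht⟩
    have hPs : ∀ v : V, (∀ t ∈ h, ρ t v = 0) → ∀ t ∈ h, ρ t (ρ s v) = 0 := by
      intro v hv t ht
      have h0 := hrel t s v
      rw [hv t ht, map_zero, hv (μ t s) (hts t ht)] at h0
      simpa using h0
    have hPσ : ∀ v : V, (∀ t ∈ h, ρ t v = 0) → ∀ t ∈ h, ρ t (ρ σ v) = 0 := by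
      intro v hv t ht
      have h0 := hrel t σ v
      rw [hv t ht, map_zero, hv (μ t σ) (htσ t ht)] at h0
      simpa using h0
    have hQs : ∀ v : V, ρ σ v = 0 → ρ σ (ρ s v) = 0 := by
      intro v hv
      have h0 := hrel σ s v
      rw [hv, map_zero, hσs, map_zero] at h0
      simpa using h0
    have hσ2 : ∀ v : V, ρ σ (ρ σ v) = 0 := by
      intro v
      have h0 := hrel σ σ v
      rw [hσσ, map_zero, LinearMap.zero_apply, add_zero] at h0
      have h2 : (2 : K) • ρ σ (ρ σ v) = 0 := by rw [two_smul]; exact h0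
      exact (smul_eq_zero.mp h2).resolve_left two_ne_zero
    obtain ⟨w1, hw1ne, hPw1, hw1σ⟩ : ∃ w1 : V, w1 ≠ 0 ∧ (∀ t ∈ h, ρ t w1 = 0) ∧ ρ σ w1 = 0 := by
      by_cases hc : ρ σ w = 0
      · exact ⟨w, hwne, hPw, hc⟩
      · exact ⟨ρ σ w, hc, hPσ w hPw, hσ2 w⟩
    have hstep : ∀ v : V, (∀ t ∈ h, ρ t v = 0) → ρ σ v = 0 →
        (∀ t ∈ h, ρ t (ρ s v) = 0) ∧ ρ σ (ρ s v) = 0 :=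
      fun v hP hσv => ⟨hPs v hP, hQs v hσv⟩
    obtain ⟨v, hvne, hvP, hvσ, hvs⟩ :
        ∃ v : V, v ≠ 0 ∧ (∀ t ∈ h, ρ t v = 0) ∧ ρ σ v = 0 ∧ ρ s v = 0 := by
      by_cases h1' : ρ s w1 = 0
      · exact ⟨w1, hw1ne, hPw1, hw1σ, h1'⟩
      by_cases h2' : ρ s (ρ s w1) = 0
      · obtain ⟨a, b⟩ := hstep w1 hPw1 hw1σ
        exact ⟨ρ s w1, h1', a, b, h2'⟩
      by_cases h3' : ρ s (ρ s (ρ s w1)) = 0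
      · obtain ⟨a, b⟩ := hstep w1 hPw1 hw1σ
        obtain ⟨a2, b2⟩ := hstep _ a b
        exact ⟨_, h2', a2, b2, h3'⟩
      · obtain ⟨a, b⟩ := hstep w1 hPw1 hw1σ
        obtain ⟨a2, b2⟩ := hstep _ a b
        obtain ⟨a3, b3⟩ := hstep _ a2 b2
        exact ⟨_, h3', a3, b3, h4 s w1⟩
    refine ⟨v, hvne, fun a => ?_⟩
    have ha : a ∈ h ⊔ Submodule.span K {s, σ} := by rw [htop]; trivial
    obtain ⟨t, ht, wv, hwv, rfl⟩ := Submodule.mem_sup.mp ha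
    obtain ⟨α, β, rfl⟩ := Submodule.mem_span_pair.mp hwv
    simp only [map_add, map_smul, LinearMap.add_apply, LinearMap.smul_apply]
    rw [hvP t ht, hvs, hvσ]
    simp
/-- A pseudo-euclidean mock-Lie superalgebra with non-trivial odd part has a non-zero
odd element in its annihilator. -/
theorem exists_odd_ann_element {K : Type*} [Field K] [CharZero K]
    {J : Type*} [AddCommGroup J] [Module K J] [FiniteDimensional K J]
    (M : MockLieSuper K J) (B : J →ₗ[K] J →ₗ[K] K)
    (hPE : IsPseudoEuclidean M B)
    (h1 : M.gr 1 ≠ ⊥) :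
    ∃ x ∈ M.gr 1, x ≠ 0 ∧ ∀ y : J, M.mul x y = 0 := by
  -- membership facts
  have m00 : ∀ x ∈ M.gr 0, ∀ y ∈ M.gr 0, M.mul x y ∈ M.gr 0 := by
    intro x hx y hy
    simpa using M.mul_mem 0 0 x hx y hy
  have m01 : ∀ x ∈ M.gr 0, ∀ y ∈ M.gr 1, M.mul x y ∈ M.gr 1 := by
    intro x hx y hy
    simpa using M.mul_mem 0 1 x hx y hy
  have m11 : ∀ x ∈ M.gr 1, ∀ y ∈ M.gr 1, M.mul x y ∈ M.gr 0 := by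
    intro x hx y hy
    have e : ((1 : ZMod 2) + 1) = 0 := rfl
    simpa [e] using M.mul_mem 1 1 x hx y hy
  -- commutation facts (all the relevant signs are +1)
  have hv0 : ((0 : ZMod 2)).val = 0 := rfl
  have hv1 : ((1 : ZMod 2)).val = 1 := rfl
  have c00 : ∀ x ∈ M.gr 0, ∀ y ∈ M.gr 0, M.mul x y = M.mul y x := by
    intro x hx y hy
    simpa [hv0] using M.supercomm 0 0 x hx y hy
  have c10 : ∀ x ∈ M.gr 1, ∀ y ∈ M.gr 0, M.mul x y = M.mul y x := by
    intro x hx y hy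
    simpa [hv0, hv1] using M.supercomm 1 0 x hx y hy
  -- Jacobi in even degrees
  have j000 : ∀ x ∈ M.gr 0, ∀ y ∈ M.gr 0, ∀ z ∈ M.gr 0,
      M.mul x (M.mul y z) + M.mul y (M.mul x z) + M.mul (M.mul x y) z = 0 := by
    intro x hx y hy z hz
    have h0 := M.superJacobi 0 0 0 x hx y hy z hz
    simp only [hv0, Nat.mul_zero, pow_zero, one_smul] at h0
    rw [c00 z hz x hx] at h0
    rw [c00 z hz (M.mul x y) (m00 x hx y hy)] at h0
    exact h0
  -- the mixed relation
  have j001 : ∀ x ∈ M.gr 0, ∀ y ∈ M.gr 0, ∀ v ∈ M.gr 1,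
      M.mul x (M.mul y v) + M.mul y (M.mul x v) + M.mul (M.mul x y) v = 0 := by
    intro x hx y hy v hv
    have h0 := M.superJacobi 0 0 1 x hx y hy v hv
    simp only [hv0, hv1, Nat.zero_mul, Nat.mul_zero, Nat.mul_one, pow_zero, one_smul] at h0
    rw [c10 v hv x hx] at h0
    rw [c10 v hv (M.mul x y) (m00 x hx y hy)] at h0
    exact h0
  -- set up the mock-Lie representation of (gr 0) on (gr 1)
  haveI : Nontrivial ↥(M.gr 1) := Submodule.nontrivial_iff_ne_bot.mpr h1
  let μ : ↥(M.gr 0) →ₗ[K] ↥(M.gr 0) →ₗ[K] ↥(M.gr 0) :=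
    LinearMap.mk₂ K (fun a b => ⟨M.mul a b, m00 a a.2 b b.2⟩)
      (fun a a' b => Subtype.ext (by simp))
      (fun c a b => Subtype.ext (by simp))
      (fun a b b' => Subtype.ext (by simp))
      (fun c a b => Subtype.ext (by simp))
  let ρ : ↥(M.gr 0) →ₗ[K] ↥(M.gr 1) →ₗ[K] ↥(M.gr 1) :=
    LinearMap.mk₂ K (fun a v => ⟨M.mul a v, m01 a a.2 v v.2⟩)
      (fun a a' b => Subtype.ext (by simp))
      (fun c a b => Subtype.ext (by simp))
      (fun a b b' => Subtype.ext (by simp))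
      (fun c a b => Subtype.ext (by simp))
  have hμcoe : ∀ a b : ↥(M.gr 0), ((μ a b : ↥(M.gr 0)) : J) = M.mul (a : J) (b : J) :=
    fun a b => rfl
  have hρcoe : ∀ (a : ↥(M.gr 0)) (v : ↥(M.gr 1)),
      ((ρ a v : ↥(M.gr 1)) : J) = M.mul (a : J) (v : J) := fun a v => rfl
  have hcomm : ∀ a b : ↥(M.gr 0), μ a b = μ b a :=
    fun a b => Subtype.ext (c00 a a.2 b b.2)
  have hjac : ∀ a b c : ↥(M.gr 0), μ a (μ b c) + μ b (μ a c) + μ (μ a b) c = 0 := by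
    intro a b c
    apply Subtype.ext
    simpa [hμcoe] using j000 (a : J) a.2 b b.2 c c.2
  have hrel : ∀ (a b : ↥(M.gr 0)) (v : ↥(M.gr 1)),
      ρ a (ρ b v) + ρ b (ρ a v) + ρ (μ a b) v = 0 := by
    intro a b v
    apply Subtype.ext
    simpa [hρcoe, hμcoe] using j001 (a : J) a.2 b b.2 v v.2
  obtain ⟨v, hvne, hvkill⟩ :=
    mockEngel (Module.finrank K ↥(M.gr 0)) ↥(M.gr 0) le_rfl ↥(M.gr 1) μ ρ hcomm hjac hrel
  -- the element x := ↑v works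
  have hvkill' : ∀ a ∈ M.gr 0, M.mul a (v : J) = 0 := by
    intro a ha
    have h0 := hvkill ⟨a, ha⟩
    exact congrArg Subtype.val h0
  refine ⟨(v : J), v.2, by simpa using hvne, fun y => ?_⟩
  -- decompose y
  have hdec : ∀ y : J, ∃ y0 ∈ M.gr 0, ∃ y1 ∈ M.gr 1, y = y0 + y1 := by
    intro y
    have hy : y ∈ M.gr 0 ⊔ M.gr 1 := by
      rw [M.compl.sup_eq_top]; trivial
    obtain ⟨y0, hy0, y1, hy1, hsum⟩ := Submodule.mem_sup.mp hy
    exact ⟨y0, hy0, y1, hy1, hsum.symm⟩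
  obtain ⟨y0, hy0, y1, hy1, rfl⟩ := hdec y
  have hxy0 : M.mul (v : J) y0 = 0 := by
    rw [c10 (v : J) v.2 y0 hy0]
    exact hvkill' y0 hy0
  have hxy1 : M.mul (v : J) y1 = 0 := by
    apply hPE.nondeg
    intro z
    obtain ⟨z0, hz0, z1, hz1, rfl⟩ := hdec z
    have hu : M.mul (v : J) y1 ∈ M.gr 0 := m11 (v : J) v.2 y1 hy1
    have hz1' : B (M.mul (v : J) y1) z1 = 0 :=
      hPE.even 0 1 (by decide) _ hu z1 hz1
    have hz0' : B (M.mul (v : J) y1) z0 = 0 := by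
      rw [hPE.invariant]
      rw [show M.mul y1 z0 = M.mul z0 y1 from c10 y1 hy1 z0 hz0]
      rw [← hPE.invariant]
      rw [show M.mul (v : J) z0 = M.mul z0 (v : J) from c10 (v : J) v.2 z0 hz0]
      rw [hvkill' z0 hz0]
      simp
    rw [map_add, hz0', hz1', add_zero]
  rw [map_add, hxy0, hxy1, add_zero]
end

section
/- Let (J₁,•₁,B) be a pseudo-euclidean mock-Lie superalgebra and (J₂,•₂) a mock-Lie superalgebra over a field K of characteristic 0, and let φ : J₂ → End(J₁) be a representation of J₂ on J₁ such that each φ(a) (a ∈ J₂ homogeneous of degree |a|) is an anti-superderivation of (J₁,•₁) of degree |a| that is supersymmetric with respect to B. Define the even bilinear map ϕ : J₁ × J₁ → J₂* by ϕ(x,y)(a) = (-1)^{|x|(|y|+|a|)} B(y, φ(a)(x)) for homogeneous x, y ∈ J₁, a ∈ J₂. Then: (1) J₁ ⊕ J₂* with the product (x+f) •_c (y+g) = x •₁ y + ϕ(x,y) is a mock-Lie superalgebra; and (2) the even linear map φ̃ : J₂ → End(J₁ ⊕ J₂*) defined by φ̃(a)(x+f) = φ(a)(x) + L₂*(a)(f),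 where L₂* is the coadjoint representation of J₂, is a representation of J₂ on J₁ ⊕ J₂* and each φ̃(a) is an anti-superderivation of (J₁ ⊕ J₂*, •_c) of degree |a|. -/
/-- A representation of a mock-Lie superalgebra `M` on a `ℤ/2`-graded vector space `V`:
an even linear map `π : J → End V` with `π(x•y) = -π(x)π(y) - (-1)^{|x||y|} π(y)π(x)`. -/
structure IsRep {K : Type*} [Field K] {J V : Type*} [AddCommGroup J] [Module K J]
    [AddCommGroup V] [Module K V] (M : MockLieSuper K J)
    (Vgr : ZMod 2 → Submodule K V) (π : J →ₗ[K] Module.End K V) : Prop where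
  even : ∀ i j : ZMod 2, ∀ x ∈ M.gr i, ∀ v ∈ Vgr j, π x v ∈ Vgr (i + j)
  rep : ∀ i j : ZMod 2, ∀ x ∈ M.gr i, ∀ y ∈ M.gr j,
    π (M.mul x y) = -(π x * π y) - ((-1 : K) ^ (i.val * j.val)) • (π y * π x)

set_option maxHeartbeats 1600000

theorem prodIsCompl {K V W : Type*} [Field K] [AddCommGroup V] [Module K V] [AddCommGroup W]
    [Module K W] {U U' : Submodule K V} {T T' : Submodule K W}
    (h : IsCompl U U') (h2 : IsCompl T T') : IsCompl (U.prod T) (U'.prod T') := by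
  constructor
  · rw [Submodule.disjoint_def]
    rintro ⟨a, b⟩ ⟨ha, hb⟩ ⟨ha', hb'⟩
    have e1 : a = 0 := Submodule.disjoint_def.mp h.disjoint a ha ha'
    have e2 : b = 0 := Submodule.disjoint_def.mp h2.disjoint b hb hb'
    simp_all
  · rw [codisjoint_iff, eq_top_iff]
    rintro ⟨a, b⟩ -
    have ha : a ∈ U ⊔ U' := by rw [codisjoint_iff.mp h.codisjoint]; trivial
    have hb : b ∈ T ⊔ T' := by rw [codisjoint_iff.mp h2.codisjoint]; trivial
    obtain ⟨a1, ha1, a2, ha2, rfl⟩ := Submodule.mem_sup.mp ha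
    obtain ⟨b1, hb1, b2, hb2, rfl⟩ := Submodule.mem_sup.mp hb
    exact Submodule.mem_sup.mpr ⟨(a1, b1), ⟨ha1, hb1⟩, (a2, b2), ⟨ha2, hb2⟩, rfl⟩

/-- Central extension of a pseudo-euclidean mock-Lie superalgebra `J₁` by `J₂`:
`J₁ ⊕ J₂*` with product `(x+f) •_c (y+g) = x •₁ y + ϕ(x,y)`, where
`ϕ(x,y)(a) = (-1)^{|x|(|y|+|a|)} B(y, φ(a)x)`, is a mock-Lie superalgebra, and
`φ̃(a)(x+f) = φ(a)x + L₂*(a)f` is a representation of `J₂` on it by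
anti-superderivations. -/
theorem central_extension_theorem {K : Type*} [Field K] [CharZero K]
    {J₁ J₂ : Type*} [AddCommGroup J₁] [Module K J₁] [FiniteDimensional K J₁]
    [AddCommGroup J₂] [Module K J₂] [FiniteDimensional K J₂]
    (M₁ : MockLieSuper K J₁) (M₂ : MockLieSuper K J₂)
    (B : J₁ →ₗ[K] J₁ →ₗ[K] K) (hPE : IsPseudoEuclidean M₁ B)
    (φ : J₂ →ₗ[K] Module.End K J₁)
    (hrep : IsRep M₂ M₁.gr φ)
    (hander : ∀ j i : ZMod 2, ∀ a ∈ M₂.gr j, ∀ x ∈ M₁.gr i, ∀ y : J₁,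
      φ a (M₁.mul x y) =
        -M₁.mul (φ a x) y - ((-1 : K) ^ (j.val * i.val)) • M₁.mul x (φ a y))
    (hsym : ∀ j i : ZMod 2, ∀ a ∈ M₂.gr j, ∀ x ∈ M₁.gr i, ∀ y : J₁,
      B (φ a x) y = ((-1 : K) ^ (j.val * i.val)) * B x (φ a y))
    (vphi : J₁ →ₗ[K] J₁ →ₗ[K] Module.Dual K J₂)
    (hvphi : ∀ i j k : ZMod 2, ∀ x ∈ M₁.gr i, ∀ y ∈ M₁.gr j, ∀ a ∈ M₂.gr k,
      vphi x y a = ((-1 : K) ^ (i.val * (j.val + k.val))) * B y (φ a x))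
    (mulc : (J₁ × Module.Dual K J₂) →ₗ[K] (J₁ × Module.Dual K J₂) →ₗ[K]
      (J₁ × Module.Dual K J₂))
    (hmulc : ∀ p q : J₁ × Module.Dual K J₂, mulc p q = (M₁.mul p.1 q.1, vphi p.1 q.1))
    (Lstar₂ : J₂ →ₗ[K] Module.End K (Module.Dual K J₂))
    (hLstar₂ : ∀ i p : ZMod 2, ∀ a ∈ M₂.gr i, ∀ f ∈ (M₂.gr (p + 1)).dualAnnihilator,
      Lstar₂ a f = ((-1 : K) ^ (p.val * i.val)) • (f ∘ₗ M₂.mul a))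
    (tilφ : J₂ →ₗ[K] Module.End K (J₁ × Module.Dual K J₂))
    (htilφ : ∀ a : J₂, ∀ p : J₁ × Module.Dual K J₂, tilφ a p = (φ a p.1, Lstar₂ a p.2)) :
    (∃ N : MockLieSuper K (J₁ × Module.Dual K J₂),
        (∀ i : ZMod 2, N.gr i = (M₁.gr i).prod ((M₂.gr (i + 1)).dualAnnihilator)) ∧
        N.mul = mulc) ∧
    IsRep M₂ (fun i => (M₁.gr i).prod ((M₂.gr (i + 1)).dualAnnihilator)) tilφ ∧
    (∀ j i : ZMod 2, ∀ a ∈ M₂.gr j,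
      ∀ p ∈ (M₁.gr i).prod ((M₂.gr (i + 1)).dualAnnihilator),
      ∀ q : J₁ × Module.Dual K J₂,
        tilφ a (mulc p q) =
          -mulc (tilφ a p) q - ((-1 : K) ^ (j.val * i.val)) • mulc p (tilφ a q)) := by
  classical
  have z1 : ∀ i j : ZMod 2, i + j + 1 + i = j + 1 := by decide
  have z2 : ∀ j : ZMod 2, j ≠ j + 1 := by decide
  have z3 : ∀ l p : ZMod 2, l + (l + p + 1) = p + 1 := by decide
  have z4 : ∀ i : ZMod 2, i = 0 ∨ i = 1 := by decide
  have φmem := hrep.even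
  have dec1 : ∀ x : J₁, ∃ x0 ∈ M₁.gr 0, ∃ x1 ∈ M₁.gr 1, x = x0 + x1 := by
    intro x
    have hx : x ∈ M₁.gr 0 ⊔ M₁.gr 1 := by
      rw [codisjoint_iff.mp M₁.compl.codisjoint]; trivial
    obtain ⟨a, ha, b, hb, hab⟩ := Submodule.mem_sup.mp hx
    exact ⟨a, ha, b, hb, hab.symm⟩
  have dec2 : ∀ a : J₂, ∃ a0 ∈ M₂.gr 0, ∃ a1 ∈ M₂.gr 1, a = a0 + a1 := by
    intro x
    have hx : x ∈ M₂.gr 0 ⊔ M₂.gr 1 := by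
      rw [codisjoint_iff.mp M₂.compl.codisjoint]; trivial
    obtain ⟨a, ha, b, hb, hab⟩ := Submodule.mem_sup.mp hx
    exact ⟨a, ha, b, hb, hab.symm⟩
  have dcompl : IsCompl ((M₂.gr 1).dualAnnihilator) ((M₂.gr 0).dualAnnihilator) :=
    Subspace.isCompl_dualAnnihilator M₂.compl.symm
  have decD : ∀ f : Module.Dual K J₂, ∃ f0 ∈ (M₂.gr 1).dualAnnihilator,
      ∃ f1 ∈ (M₂.gr 0).dualAnnihilator, f = f0 + f1 := by
    intro f
    have hf : f ∈ (M₂.gr 1).dualAnnihilator ⊔ (M₂.gr 0).dualAnnihilator := by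
      rw [codisjoint_iff.mp dcompl.codisjoint]; trivial
    obtain ⟨a, ha, b, hb, hab⟩ := Submodule.mem_sup.mp hf
    exact ⟨a, ha, b, hb, hab.symm⟩
  have dualext : ∀ f g : Module.Dual K J₂, (∀ k : ZMod 2, ∀ c ∈ M₂.gr k, f c = g c) → f = g := by
    intro f g h
    ext c
    obtain ⟨c0, h0, c1, h1, rfl⟩ := dec2 c
    rw [map_add, map_add, h 0 c0 h0, h 1 c1 h1]
  have vmem : ∀ i j : ZMod 2, ∀ x ∈ M₁.gr i, ∀ y ∈ M₁.gr j,
      vphi x y ∈ (M₂.gr (i + j + 1)).dualAnnihilator := by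
    intro i j x hx y hy
    rw [Submodule.mem_dualAnnihilator]
    intro a ha
    rw [hvphi i j (i + j + 1) x hx y hy a ha]
    have h1 : φ a x ∈ M₁.gr (j + 1) := by
      have h2 := φmem (i + j + 1) i a ha x hx
      rwa [z1 i j] at h2
    rw [hPE.even j (j + 1) (z2 j) y hy (φ a x) h1, mul_zero]
  have compmem : ∀ l p : ZMod 2, ∀ a ∈ M₂.gr l, ∀ f ∈ (M₂.gr (p + 1)).dualAnnihilator,
      (f ∘ₗ M₂.mul a) ∈ (M₂.gr (l + p + 1)).dualAnnihilator := by
    intro l p a ha f hf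
    rw [Submodule.mem_dualAnnihilator]
    intro w hw
    have h1 : M₂.mul a w ∈ M₂.gr (p + 1) := by
      have h2 := M₂.mul_mem l (l + p + 1) a ha w hw
      rwa [z3 l p] at h2
    simp only [LinearMap.comp_apply]
    exact (Submodule.mem_dualAnnihilator _).mp hf _ h1
  -- the key anti-superderivation identity for the second component
  have main : ∀ l i : ZMod 2, ∀ a ∈ M₂.gr l, ∀ x ∈ M₁.gr i, ∀ y : J₁,
      Lstar₂ a (vphi x y) = -vphi (φ a x) y - ((-1 : K) ^ (l.val * i.val)) • vphi x (φ a y) := by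
    intro l i a ha x hx
    have homog : ∀ m : ZMod 2, ∀ y ∈ M₁.gr m,
        Lstar₂ a (vphi x y) =
          -vphi (φ a x) y - ((-1 : K) ^ (l.val * i.val)) • vphi x (φ a y) := by
      intro m y hy
      apply dualext
      intro k c hc
      have hac : M₂.mul a c ∈ M₂.gr (l + k) := M₂.mul_mem l k a ha c hc
      have Rr : B y (φ (M₂.mul a c) x) =
          -B y (φ a (φ c x)) - (-1 : K) ^ (l.val * k.val) * B y (φ c (φ a x)) := by
        have h := LinearMap.congr_fun (hrep.rep l k a ha c hc) x
        rw [h]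
        simp [smul_eq_mul]
      have Rs : B (φ a y) (φ c x) = (-1 : K) ^ (l.val * m.val) * B y (φ a (φ c x)) :=
        hsym l m a ha y hy (φ c x)
      rw [hLstar₂ l (i + m) a ha (vphi x y) (vmem i m x hx y hy)]
      simp only [LinearMap.smul_apply, LinearMap.comp_apply, smul_eq_mul,
        LinearMap.sub_apply, LinearMap.neg_apply]
      rw [hvphi i m (l + k) x hx y hy (M₂.mul a c) hac,
        hvphi (l + i) m k (φ a x) (φmem l i a ha x hx) y hy c hc,
        hvphi i (l + m) k x hx (φ a y) (φmem l m a ha y hy) c hc,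
        Rr, Rs]
      rcases z4 i with rfl | rfl <;> rcases z4 k with rfl | rfl <;> rcases z4 l with rfl | rfl <;> rcases z4 m with rfl | rfl <;>
        norm_num [ZMod.val_add, show ((0:ZMod 2)).val = 0 from rfl,
          show ((1:ZMod 2)).val = 1 from rfl, show ((2:ZMod 2)).val = 0 from rfl,] <;> ring
    intro y
    obtain ⟨y0, h0, y1, h1, rfl⟩ := dec1 y
    have e0 := homog 0 y0 h0
    have e1 := homog 1 y1 h1
    rw [map_add (vphi x), map_add, e0, e1, map_add (φ a) y0 y1, map_add, map_add]
    module
  -- second-component representation identity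
  have Lrep : ∀ i j : ZMod 2, ∀ a ∈ M₂.gr i, ∀ b ∈ M₂.gr j, ∀ f : Module.Dual K J₂,
      Lstar₂ (M₂.mul a b) f =
        -Lstar₂ a (Lstar₂ b f) - ((-1 : K) ^ (i.val * j.val)) • Lstar₂ b (Lstar₂ a f) := by
    intro i j a ha b hb
    have hab : M₂.mul a b ∈ M₂.gr (i + j) := M₂.mul_mem i j a ha b hb
    have homog : ∀ p : ZMod 2, ∀ f ∈ (M₂.gr (p + 1)).dualAnnihilator,
        Lstar₂ (M₂.mul a b) f =
          -Lstar₂ a (Lstar₂ b f) - ((-1 : K) ^ (i.val * j.val)) • Lstar₂ b (Lstar₂ a f) := by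
      intro p f hf
      apply dualext
      intro k c hc
      have key : f (M₂.mul (M₂.mul a b) c) =
          -f (M₂.mul a (M₂.mul b c)) -
            (-1 : K) ^ (i.val * j.val) * f (M₂.mul b (M₂.mul a c)) := by
        have TJf : (-1 : K) ^ (i.val * k.val) * f (M₂.mul a (M₂.mul b c)) +
            (-1 : K) ^ (i.val * j.val) * f (M₂.mul b (M₂.mul c a)) +
            (-1 : K) ^ (j.val * k.val) * f (M₂.mul c (M₂.mul a b)) = 0 := by
          have h := congrArg f (M₂.superJacobi i j k a ha b hb c hc)
          simpa [smul_eq_mul] using h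
        have Rca : f (M₂.mul b (M₂.mul c a)) =
            (-1 : K) ^ (k.val * i.val) * f (M₂.mul b (M₂.mul a c)) := by
          rw [M₂.supercomm k i c hc a ha]
          simp [smul_eq_mul]
        have Rcab : f (M₂.mul c (M₂.mul a b)) =
            (-1 : K) ^ (k.val * ((i + j).val)) * f (M₂.mul (M₂.mul a b) c) := by
          rw [M₂.supercomm k (i + j) c hc (M₂.mul a b) hab]
          simp [smul_eq_mul]
        rw [Rca, Rcab] at TJf
        rcases z4 i with rfl | rfl <;> rcases z4 j with rfl | rfl <;> rcases z4 k with rfl | rfl <;>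
          norm_num [ZMod.val_add, show ((0:ZMod 2)).val = 0 from rfl,
            show ((1:ZMod 2)).val = 1 from rfl, show ((2:ZMod 2)).val = 0 from rfl,] at TJf ⊢ <;>
          first
            | linear_combination TJf
            | linear_combination -TJf
      have cb : (f ∘ₗ M₂.mul b) ∈ (M₂.gr (j + p + 1)).dualAnnihilator :=
        compmem j p b hb f hf
      have ca : (f ∘ₗ M₂.mul a) ∈ (M₂.gr (i + p + 1)).dualAnnihilator :=
        compmem i p a ha f hf
      rw [hLstar₂ (i + j) p (M₂.mul a b) hab f hf,
        hLstar₂ j p b hb f hf, hLstar₂ i p a ha f hf, map_smul, map_smul,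
        hLstar₂ i (j + p) a ha (f ∘ₗ M₂.mul b) cb,
        hLstar₂ j (i + p) b hb (f ∘ₗ M₂.mul a) ca]
      simp only [LinearMap.smul_apply, LinearMap.comp_apply, smul_eq_mul,
        LinearMap.sub_apply, LinearMap.neg_apply, smul_smul]
      rw [key]
      rcases z4 i with rfl | rfl <;> rcases z4 j with rfl | rfl <;> rcases z4 k with rfl | rfl <;> rcases z4 p with rfl | rfl <;>
        norm_num [ZMod.val_add, show ((0:ZMod 2)).val = 0 from rfl,
          show ((1:ZMod 2)).val = 1 from rfl, show ((2:ZMod 2)).val = 0 from rfl,] <;> ring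
    intro f
    obtain ⟨f0, h0, f1, h1, rfl⟩ := decD f
    have e0 := homog 0 f0 (by simpa using h0)
    have e1 := homog 1 f1 (by rwa [show (1 : ZMod 2) + 1 = 0 from rfl])
    rw [map_add, e0, e1, map_add (Lstar₂ b) f0 f1, map_add, map_add (Lstar₂ a) f0 f1, map_add]
    module
  refine ⟨⟨{ gr := fun i => (M₁.gr i).prod ((M₂.gr (i + 1)).dualAnnihilator)
             compl := ?_
             mul := mulc
             mul_mem := ?_
             supercomm := ?_
             superJacobi := ?_ }, fun i => rfl, rfl⟩, ⟨?_, ?_⟩, ?_⟩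
  · -- compl
    have e0 : (0 : ZMod 2) + 1 = 1 := by decide
    have e1 : (1 : ZMod 2) + 1 = 0 := by decide
    show IsCompl ((M₁.gr 0).prod ((M₂.gr (0 + 1)).dualAnnihilator))
      ((M₁.gr 1).prod ((M₂.gr (1 + 1)).dualAnnihilator))
    rw [e0, e1]
    exact prodIsCompl M₁.compl dcompl
  · -- mul_mem
    rintro i j ⟨x, f⟩ ⟨hx, hf⟩ ⟨y, g⟩ ⟨hy, hg⟩
    rw [hmulc]
    exact ⟨M₁.mul_mem i j x hx y hy, vmem i j x hx y hy⟩
  · -- supercomm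
    rintro i j ⟨x, f⟩ ⟨hx, hf⟩ ⟨y, g⟩ ⟨hy, hg⟩
    rw [hmulc, hmulc, Prod.smul_mk, Prod.mk.injEq]
    constructor
    · exact M₁.supercomm i j x hx y hy
    · apply dualext
      intro k c hc
      rw [LinearMap.smul_apply, smul_eq_mul, hvphi i j k x hx y hy c hc,
        hvphi j i k y hy x hx c hc,
        hPE.supersym j (k + i) y hy (φ c x) (φmem k i c hc x hx),
        hsym k i c hc x hx y]
      rcases z4 i with rfl | rfl <;> rcases z4 j with rfl | rfl <;> rcases z4 k with rfl | rfl <;>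
        norm_num [ZMod.val_add, show ((0:ZMod 2)).val = 0 from rfl,
          show ((1:ZMod 2)).val = 1 from rfl, show ((2:ZMod 2)).val = 0 from rfl,] <;> ring
  · -- superJacobi
    rintro i j k ⟨x, f⟩ ⟨hx, hf⟩ ⟨y, g⟩ ⟨hy, hg⟩ ⟨z, h'⟩ ⟨hz, hh⟩
    simp only [hmulc, Prod.smul_mk, Prod.mk_add_mk, Prod.mk_eq_zero]
    constructor
    · exact M₁.superJacobi i j k x hx y hy z hz
    · apply dualext _ 0
      intro l c hc
      have hyz : M₁.mul y z ∈ M₁.gr (j + k) := M₁.mul_mem j k y hy z hz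
      have hzx : M₁.mul z x ∈ M₁.gr (k + i) := M₁.mul_mem k i z hz x hx
      have hxy : M₁.mul x y ∈ M₁.gr (i + j) := M₁.mul_mem i j x hx y hy
      have R1 : B (M₁.mul y z) (φ c x) = B y (M₁.mul z (φ c x)) := hPE.invariant y z (φ c x)
      have R2 : B y (φ c (M₁.mul z x)) =
          -B y (M₁.mul (φ c z) x) - (-1 : K) ^ (l.val * k.val) * B y (M₁.mul z (φ c x)) := by
        rw [hander l k c hc z hz x]
        simp [smul_eq_mul]
      have R3 : B (φ c y) (M₁.mul z x) = (-1 : K) ^ (l.val * j.val) * B y (φ c (M₁.mul z x)) :=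
        hsym l j c hc y hy (M₁.mul z x)
      have R4 : B (M₁.mul z x) (φ c y) =
          (-1 : K) ^ ((k + i).val * ((l + j).val)) * B (φ c y) (M₁.mul z x) :=
        hPE.supersym (k + i) (l + j) (M₁.mul z x) hzx (φ c y) (φmem l j c hc y hy)
      have R5 : B y (M₁.mul (φ c z) x) = B (M₁.mul y (φ c z)) x :=
        (hPE.invariant y (φ c z) x).symm
      have R6 : B (M₁.mul y (φ c z)) x =
          (-1 : K) ^ (j.val * ((l + k).val)) * B (M₁.mul (φ c z) y) x := by
        rw [M₁.supercomm j (l + k) y hy (φ c z) (φmem l k c hc z hz)]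
        simp [smul_eq_mul]
      have R7 : B (M₁.mul (φ c z) y) x = B (φ c z) (M₁.mul y x) := hPE.invariant _ y x
      have R8 : B (φ c z) (M₁.mul y x) = (-1 : K) ^ (j.val * i.val) * B (φ c z) (M₁.mul x y) := by
        rw [M₁.supercomm j i y hy x hx]
        simp [smul_eq_mul]
      have R9 : B (φ c z) (M₁.mul x y) =
          (-1 : K) ^ ((l + k).val * ((i + j).val)) * B (M₁.mul x y) (φ c z) :=
        hPE.supersym (l + k) (i + j) (φ c z) (φmem l k c hc z hz) (M₁.mul x y) hxy
      simp only [LinearMap.add_apply, LinearMap.smul_apply, LinearMap.zero_apply, smul_eq_mul]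
      rw [hvphi i (j + k) l x hx (M₁.mul y z) hyz c hc,
        hvphi j (k + i) l y hy (M₁.mul z x) hzx c hc,
        hvphi k (i + j) l z hz (M₁.mul x y) hxy c hc,
        R1, R4, R3, R2, R5, R6, R7, R8, R9]
      rcases z4 i with rfl | rfl <;> rcases z4 j with rfl | rfl <;> rcases z4 k with rfl | rfl <;> rcases z4 l with rfl | rfl <;>
        norm_num [ZMod.val_add, show ((0:ZMod 2)).val = 0 from rfl,
          show ((1:ZMod 2)).val = 1 from rfl, show ((2:ZMod 2)).val = 0 from rfl,] <;> ring
  · -- IsRep even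
    rintro i j a ha ⟨x, f⟩ ⟨hx, hf⟩
    rw [htilφ]
    refine ⟨φmem i j a ha x hx, ?_⟩
    rw [hLstar₂ i j a ha f hf]
    exact Submodule.smul_mem _ _ (compmem i j a ha f hf)
  · -- IsRep rep
    intro i j a ha b hb
    refine LinearMap.ext fun p => ?_
    have h1 := LinearMap.congr_fun (hrep.rep i j a ha b hb) p.1
    simp only [Module.End.mul_apply, LinearMap.sub_apply, LinearMap.neg_apply,
      LinearMap.smul_apply] at h1 ⊢
    rw [htilφ, htilφ, htilφ, htilφ, htilφ, Lrep i j a ha b hb p.2]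
    rw [Prod.ext_iff]
    constructor
    · simpa using h1
    · simp
  · -- anti-superderivation
    rintro l i a ha ⟨x, f⟩ ⟨hx, hf⟩ q
    rw [hmulc, htilφ, htilφ, htilφ, hmulc, hmulc]
    rw [Prod.ext_iff]
    constructor
    · have h := hander l i a ha x hx q.1
      simpa using h
    · have h := main l i a ha x hx q.1
      simpa using h
end

section
/- Let (J₁,•₁) and (J₂,•₂) be mock-Lie superalgebras over a field K of characteristic 0, and let φ : J₂ → End(J₁) be a representation of J₂ on J₁ such that each φ(a) (a ∈ J₂ homogeneous of degree |a|) is an anti-superderivation of (J₁,•₁) of degree |a|. Then the Z/2-graded vector space J₁ ⊕ J₂, graded by (J₁)_i ⊕ (J₂)_i, with the product (x+a) •ᵢ (y+b) = x •₁ y + φ(a)(y) + (-1)^{|x||y|} φ(b)(x) + a •₂ b for homogeneous x ∈ (J₁)_{|x|}, a ∈ (J₂)_{|x|}, y ∈ (J₁)_{|y|}, b ∈ (J₂)_{|y|}, is a mock-Lie superalgebra. -/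
theorem prodIsCompl_s13 {K V W : Type*} [Field K] [AddCommGroup V] [Module K V] [AddCommGroup W] [Module K W]
  {p₁ q₁ : Submodule K V} {p₂ q₂ : Submodule K W} (h1 : IsCompl p₁ q₁) (h2 : IsCompl p₂ q₂) :
  IsCompl (p₁.prod p₂) (q₁.prod q₂) := by
  constructor
  · rw [Submodule.disjoint_def]
    rintro ⟨v, w⟩ ⟨hv, hw⟩ ⟨hv', hw'⟩
    have := h1.disjoint.le_bot ⟨hv, hv'⟩
    have := h2.disjoint.le_bot ⟨hw, hw'⟩
    simp_all [Prod.ext_iff]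
  · rw [codisjoint_iff, Submodule.eq_top_iff']
    intro ⟨v, w⟩
    have hv : v ∈ p₁ ⊔ q₁ := by rw [h1.codisjoint.eq_top]; trivial
    have hw : w ∈ p₂ ⊔ q₂ := by rw [h2.codisjoint.eq_top]; trivial
    rw [Submodule.mem_sup] at *
    obtain ⟨a, ha, b, hb, rfl⟩ := hv
    obtain ⟨c, hc, d, hd, rfl⟩ := hw
    exact ⟨(a,c), ⟨ha,hc⟩, (b,d), ⟨hb,hd⟩, rfl⟩


set_option maxHeartbeats 2000000 in
/-- Semi-direct product of mock-Lie superalgebras: if `φ` is a representation of `J₂`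
on `J₁` acting by anti-superderivations, then `J₁ ⊕ J₂` with the product
`(x+a) •ᵢ (y+b) = x •₁ y + φ(a)y + (-1)^{|x||y|} φ(b)x + a •₂ b`
is a mock-Lie superalgebra. -/
theorem semidirect_by_antiderivations {K : Type*} [Field K] [CharZero K]
    {J₁ J₂ : Type*} [AddCommGroup J₁] [Module K J₁] [FiniteDimensional K J₁]
    [AddCommGroup J₂] [Module K J₂] [FiniteDimensional K J₂]
    (M₁ : MockLieSuper K J₁) (M₂ : MockLieSuper K J₂)
    (φ : J₂ →ₗ[K] Module.End K J₁)
    (hrep : IsRep M₂ M₁.gr φ)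
    (hander : ∀ j i : ZMod 2, ∀ a ∈ M₂.gr j, ∀ x ∈ M₁.gr i, ∀ y : J₁,
      φ a (M₁.mul x y) =
        -M₁.mul (φ a x) y - ((-1 : K) ^ (j.val * i.val)) • M₁.mul x (φ a y))
    (muli : (J₁ × J₂) →ₗ[K] (J₁ × J₂) →ₗ[K] (J₁ × J₂))
    (hmuli : ∀ i j : ZMod 2, ∀ x ∈ M₁.gr i, ∀ a ∈ M₂.gr i, ∀ y ∈ M₁.gr j, ∀ b ∈ M₂.gr j,
      muli (x, a) (y, b) =
        (M₁.mul x y + φ a y + ((-1 : K) ^ (i.val * j.val)) • φ b x, M₂.mul a b)) :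
    ∃ N : MockLieSuper K (J₁ × J₂),
      (∀ i : ZMod 2, N.gr i = (M₁.gr i).prod (M₂.gr i)) ∧ N.mul = muli := by
  refine ⟨{ gr := fun i => (M₁.gr i).prod (M₂.gr i),
            compl := prodIsCompl_s13 M₁.compl M₂.compl,
            mul := muli,
            mul_mem := ?_, supercomm := ?_, superJacobi := ?_ }, fun i => rfl, rfl⟩
  · rintro i j ⟨x, a⟩ hp ⟨y, b⟩ hq
    obtain ⟨hx, ha⟩ := hp
    obtain ⟨hy, hb⟩ := hq
    rw [hmuli i j x hx a ha y hy b hb]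
    refine ⟨?_, M₂.mul_mem i j a ha b hb⟩
    refine Submodule.add_mem _ (Submodule.add_mem _ (M₁.mul_mem i j x hx y hy)
      (hrep.even i j a ha y hy)) (Submodule.smul_mem _ _ ?_)
    rw [add_comm]
    exact hrep.even j i b hb x hx
  · rintro i j ⟨x, a⟩ hp ⟨y, b⟩ hq
    obtain ⟨hx, ha⟩ := hp
    obtain ⟨hy, hb⟩ := hq
    rw [hmuli i j x hx a ha y hy b hb, hmuli j i y hy b hb x hx a ha]
    rw [Prod.ext_iff]
    constructor
    · simp only [Prod.smul_mk, Prod.fst]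
      rw [M₁.supercomm i j x hx y hy]
      match_scalars <;> rcases (show ∀ t : ZMod 2, t = 0 ∨ t = 1 by decide) i with rfl | rfl <;> rcases (show ∀ t : ZMod 2, t = 0 ∨ t = 1 by decide) j with rfl | rfl <;> norm_num [ZMod.val_one, ZMod.val_zero]
    · simp only [Prod.smul_mk, Prod.snd]
      rw [M₂.supercomm i j a ha b hb]
  · rintro i j k ⟨x, a⟩ hp ⟨y, b⟩ hq ⟨z, c⟩ hr
    obtain ⟨hx, ha⟩ := hp
    obtain ⟨hy, hb⟩ := hq
    obtain ⟨hz, hc⟩ := hr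
    have hU : M₁.mul y z + φ b z + ((-1:K)^(j.val*k.val)) • φ c y ∈ M₁.gr (j+k) :=
      Submodule.add_mem _ (Submodule.add_mem _ (M₁.mul_mem j k y hy z hz)
        (hrep.even j k b hb z hz)) (Submodule.smul_mem _ _
          (by rw [add_comm]; exact hrep.even k j c hc y hy))
    have hQ : M₂.mul b c ∈ M₂.gr (j+k) := M₂.mul_mem j k b hb c hc
    have hV : M₁.mul z x + φ c x + ((-1:K)^(k.val*i.val)) • φ a z ∈ M₁.gr (k+i) :=
      Submodule.add_mem _ (Submodule.add_mem _ (M₁.mul_mem k i z hz x hx)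
        (hrep.even k i c hc x hx)) (Submodule.smul_mem _ _
          (by rw [add_comm]; exact hrep.even i k a ha z hz))
    have hR : M₂.mul c a ∈ M₂.gr (k+i) := M₂.mul_mem k i c hc a ha
    have hW : M₁.mul x y + φ a y + ((-1:K)^(i.val*j.val)) • φ b x ∈ M₁.gr (i+j) :=
      Submodule.add_mem _ (Submodule.add_mem _ (M₁.mul_mem i j x hx y hy)
        (hrep.even i j a ha y hy)) (Submodule.smul_mem _ _
          (by rw [add_comm]; exact hrep.even j i b hb x hx))
    have hS : M₂.mul a b ∈ M₂.gr (i+j) := M₂.mul_mem i j a ha b hb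
    have h1 := hmuli j k y hy b hb z hz c hc
    have h2 := hmuli i (j+k) x hx a ha _ hU _ hQ
    have h3 := hmuli k i z hz c hc x hx a ha
    have h4 := hmuli j (k+i) y hy b hb _ hV _ hR
    have h5 := hmuli i j x hx a ha y hy b hb
    have h6 := hmuli k (i+j) z hz c hc _ hW _ hS
    rw [h1, h2, h3, h4, h5, h6]
    have hra : φ (M₂.mul b c) x = -(φ b (φ c x)) - ((-1:K)^(j.val*k.val)) • φ c (φ b x) := by
      have := LinearMap.congr_fun (hrep.rep j k b hb c hc) x
      simpa using this
    have hrb : φ (M₂.mul c a) y = -(φ c (φ a y)) - ((-1:K)^(k.val*i.val)) • φ a (φ c y) := by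
      have := LinearMap.congr_fun (hrep.rep k i c hc a ha) y
      simpa using this
    have hrc : φ (M₂.mul a b) z = -(φ a (φ b z)) - ((-1:K)^(i.val*j.val)) • φ b (φ a z) := by
      have := LinearMap.congr_fun (hrep.rep i j a ha b hb) z
      simpa using this
    have hda := hander i j a ha y hy z
    have hdb := hander j k b hb z hz x
    have hdc := hander k i c hc x hx y
    have hs1 := M₁.supercomm (i+j) k _ (hrep.even i j a ha y hy) z hz
    have hs2 := M₁.supercomm (j+k) i _ (hrep.even j k b hb z hz) x hx
    have hs3 := M₁.supercomm (k+i) j _ (hrep.even k i c hc x hx) y hy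
    have hJ := M₁.superJacobi i j k x hx y hy z hz
    rw [Prod.ext_iff]
    simp only [Prod.smul_mk, Prod.mk_add_mk, Prod.fst, Prod.snd, Prod.mk_eq_zero, Prod.fst_zero, Prod.snd_zero]
    refine ⟨?_, M₂.superJacobi i j k a ha b hb c hc⟩
    simp only [map_add, map_smul]
    rw [hra, hrb, hrc, hda, hdb, hdc, hs1, hs2, hs3, ← hJ]
    match_scalars <;> rcases (show ∀ t : ZMod 2, t = 0 ∨ t = 1 by decide) i with rfl | rfl <;> rcases (show ∀ t : ZMod 2, t = 0 ∨ t = 1 by decide) j with rfl | rfl <;> rcases (show ∀ t : ZMod 2, t = 0 ∨ t = 1 by decide) k with rfl | rfl <;>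
      norm_num [ZMod.val_add, ZMod.val_one, ZMod.val_zero, show ZMod.val (2 : ZMod 2) = 0 by decide]
end

section
/- Let J = J₂ ⊕ J₁ ⊕ J₂* be the double extension of a pseudo-euclidean mock-Lie superalgebra (J₁,•₁,B) by a mock-Lie superalgebra (J₂,•₂) by means of a representation φ of J₂ by supersymmetric anti-superderivations of J₁, with product (a+x+f) •_d (b+y+g) = a •₂ b + x •₁ y + φ(a)(y) + (-1)^{|x||y|} φ(b)(x) + L₂*(a)(g) + (-1)^{|x||y|} L₂*(b)(f) + ϕ(x,y), where ϕ(x,y)(c) = (-1)^{|x|(|y|+|c|)} B(y, φ(c)(x)). Let σ be a supersymmetric invariant bilinear form on J₂. Then the bilinear form B̃ on J defined by B̃(a+x+f, b+y+g) = B(x,y) + σ(a,b) + f(b) + (-1)^{|x||y|} g(a) is supersymmetric and invariant on (J, •_d). -/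
/-- On the double extension `J₂ ⊕ J₁ ⊕ J₂*`, the bilinear form
`B̃(a+x+f, b+y+g) = B(x,y) + σ(a,b) + f(b) + (-1)^{|x||y|} g(a)`,
where `σ` is a supersymmetric invariant bilinear form on `J₂`, is supersymmetric
and invariant. -/
theorem double_extension_bilinear_form {K : Type*} [Field K] [CharZero K]
    {J₁ J₂ : Type*} [AddCommGroup J₁] [Module K J₁] [FiniteDimensional K J₁]
    [AddCommGroup J₂] [Module K J₂] [FiniteDimensional K J₂]
    (M₁ : MockLieSuper K J₁) (M₂ : MockLieSuper K J₂)
    (B : J₁ →ₗ[K] J₁ →ₗ[K] K) (hPE : IsPseudoEuclidean M₁ B)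
    (φ : J₂ →ₗ[K] Module.End K J₁)
    (hrep : IsRep M₂ M₁.gr φ)
    (hander : ∀ j i : ZMod 2, ∀ a ∈ M₂.gr j, ∀ x ∈ M₁.gr i, ∀ y : J₁,
      φ a (M₁.mul x y) =
        -M₁.mul (φ a x) y - ((-1 : K) ^ (j.val * i.val)) • M₁.mul x (φ a y))
    (hsym : ∀ j i : ZMod 2, ∀ a ∈ M₂.gr j, ∀ x ∈ M₁.gr i, ∀ y : J₁,
      B (φ a x) y = ((-1 : K) ^ (j.val * i.val)) * B x (φ a y))
    (vphi : J₁ →ₗ[K] J₁ →ₗ[K] Module.Dual K J₂)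
    (hvphi : ∀ i j k : ZMod 2, ∀ x ∈ M₁.gr i, ∀ y ∈ M₁.gr j, ∀ a ∈ M₂.gr k,
      vphi x y a = ((-1 : K) ^ (i.val * (j.val + k.val))) * B y (φ a x))
    (Lstar₂ : J₂ →ₗ[K] Module.End K (Module.Dual K J₂))
    (hLstar₂ : ∀ i p : ZMod 2, ∀ a ∈ M₂.gr i, ∀ f ∈ (M₂.gr (p + 1)).dualAnnihilator,
      Lstar₂ a f = ((-1 : K) ^ (p.val * i.val)) • (f ∘ₗ M₂.mul a))
    (muld : (J₂ × J₁ × Module.Dual K J₂) →ₗ[K] (J₂ × J₁ × Module.Dual K J₂) →ₗ[K]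
      (J₂ × J₁ × Module.Dual K J₂))
    (hmuld : ∀ i j : ZMod 2,
      ∀ p ∈ (M₂.gr i).prod ((M₁.gr i).prod ((M₂.gr (i + 1)).dualAnnihilator)),
      ∀ q ∈ (M₂.gr j).prod ((M₁.gr j).prod ((M₂.gr (j + 1)).dualAnnihilator)),
      muld p q = (M₂.mul p.1 q.1,
        M₁.mul p.2.1 q.2.1 + φ p.1 q.2.1 + ((-1 : K) ^ (i.val * j.val)) • φ q.1 p.2.1,
        Lstar₂ p.1 q.2.2 + ((-1 : K) ^ (i.val * j.val)) • Lstar₂ q.1 p.2.2 +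
          vphi p.2.1 q.2.1))
    (σ : J₂ →ₗ[K] J₂ →ₗ[K] K)
    (hσsym : ∀ i j : ZMod 2, ∀ a ∈ M₂.gr i, ∀ b ∈ M₂.gr j,
      σ a b = ((-1 : K) ^ (i.val * j.val)) * σ b a)
    (hσinv : ∀ a b c : J₂, σ (M₂.mul a b) c = σ a (M₂.mul b c))
    (Btil : (J₂ × J₁ × Module.Dual K J₂) →ₗ[K] (J₂ × J₁ × Module.Dual K J₂) →ₗ[K] K)
    (hBtil : ∀ i j : ZMod 2,
      ∀ p ∈ (M₂.gr i).prod ((M₁.gr i).prod ((M₂.gr (i + 1)).dualAnnihilator)),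
      ∀ q ∈ (M₂.gr j).prod ((M₁.gr j).prod ((M₂.gr (j + 1)).dualAnnihilator)),
      Btil p q = B p.2.1 q.2.1 + σ p.1 q.1 + p.2.2 q.1 +
        ((-1 : K) ^ (i.val * j.val)) * q.2.2 p.1) :
    (∀ i j : ZMod 2,
      ∀ p ∈ (M₂.gr i).prod ((M₁.gr i).prod ((M₂.gr (i + 1)).dualAnnihilator)),
      ∀ q ∈ (M₂.gr j).prod ((M₁.gr j).prod ((M₂.gr (j + 1)).dualAnnihilator)),
        Btil p q = ((-1 : K) ^ (i.val * j.val)) * Btil q p) ∧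
    (∀ p q r : J₂ × J₁ × Module.Dual K J₂, Btil (muld p q) r = Btil p (muld q r)) := by
  
  have neg_sq : ∀ n : ℕ, (-1:K)^n * (-1:K)^n = 1 := fun n => by
    rw [← pow_add]; exact Even.neg_one_pow ⟨n, rfl⟩
  have two_eq : ∀ i : ZMod 2, i + i = 0 := by decide
  have eA : ∀ i j : ZMod 2, i + (i + j + 1) = j + 1 := by decide
  have eB : ∀ i j : ZMod 2, j + (i + j + 1) = i + 1 := by decide
  have eC : ∀ i j : ZMod 2, (i + j + 1) + i = j + 1 := by decide
  have eNe : ∀ j : ZMod 2, j ≠ j + 1 := by decide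
  constructor
  · intro i j p hp q hq
    rw [hBtil i j p hp q hq, hBtil j i q hq p hp]
    simp only [Submodule.mem_prod] at hp hq
    linear_combination hPE.supersym i j p.2.1 hp.2.1 q.2.1 hq.2.1 +
      hσsym i j p.1 hp.1 q.1 hq.1 - p.2.2 q.1 * neg_sq (i.val * j.val)
  · -- key homogeneous case
    have key : ∀ i j k : ZMod 2,
        ∀ p ∈ (M₂.gr i).prod ((M₁.gr i).prod ((M₂.gr (i + 1)).dualAnnihilator)),
        ∀ q ∈ (M₂.gr j).prod ((M₁.gr j).prod ((M₂.gr (j + 1)).dualAnnihilator)),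
        ∀ r ∈ (M₂.gr k).prod ((M₁.gr k).prod ((M₂.gr (k + 1)).dualAnnihilator)),
        Btil (muld p q) r = Btil p (muld q r) := by
      intro i j k p hp q hq r hr
      obtain ⟨a, x, f⟩ := p; obtain ⟨b, y, g⟩ := q; obtain ⟨c, z, h⟩ := r
      simp only [Submodule.mem_prod] at hp hq hr
      obtain ⟨ha, hx, hf⟩ := hp; obtain ⟨hb, hy, hg⟩ := hq; obtain ⟨hc, hz, hh⟩ := hr
      have hp' : (a,x,f) ∈ (M₂.gr i).prod ((M₁.gr i).prod ((M₂.gr (i + 1)).dualAnnihilator)) :=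
        Submodule.mem_prod.mpr ⟨ha, Submodule.mem_prod.mpr ⟨hx, hf⟩⟩
      have hq' : (b,y,g) ∈ (M₂.gr j).prod ((M₁.gr j).prod ((M₂.gr (j + 1)).dualAnnihilator)) :=
        Submodule.mem_prod.mpr ⟨hb, Submodule.mem_prod.mpr ⟨hy, hg⟩⟩
      have hr' : (c,z,h) ∈ (M₂.gr k).prod ((M₁.gr k).prod ((M₂.gr (k + 1)).dualAnnihilator)) :=
        Submodule.mem_prod.mpr ⟨hc, Submodule.mem_prod.mpr ⟨hz, hh⟩⟩
      -- membership of products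
      have hdualmem : ∀ i j : ZMod 2, ∀ a, ∀ ha : a ∈ M₂.gr i, ∀ x, ∀ hx : x ∈ M₁.gr i,
          ∀ f, ∀ hf : f ∈ (M₂.gr (i+1)).dualAnnihilator,
          ∀ b, ∀ hb : b ∈ M₂.gr j, ∀ y, ∀ hy : y ∈ M₁.gr j,
          ∀ g, ∀ hg : g ∈ (M₂.gr (j+1)).dualAnnihilator,
          Lstar₂ a g + ((-1 : K) ^ (i.val * j.val)) • Lstar₂ b f + vphi x y
            ∈ (M₂.gr (i + j + 1)).dualAnnihilator := by
        intro i j a ha x hx f hf b hb y hy g hg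
        rw [Submodule.mem_dualAnnihilator]
        intro c' hc'
        rw [hLstar₂ i j a ha g hg, hLstar₂ j i b hb f hf]
        simp only [LinearMap.add_apply, LinearMap.smul_apply, LinearMap.comp_apply,
          smul_eq_mul]
        rw [hvphi i j (i+j+1) x hx y hy c' hc']
        rw [(Submodule.mem_dualAnnihilator _).mp hg _ (eA i j ▸ M₂.mul_mem i (i+j+1) a ha c' hc')]
        rw [(Submodule.mem_dualAnnihilator _).mp hf _ (eB i j ▸ M₂.mul_mem j (i+j+1) b hb c' hc')]
        rw [hPE.even j (j+1) (eNe j) y hy (φ c' x) (eC i j ▸ hrep.even (i+j+1) i c' hc' x hx)]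
        ring
      have hmulmem : ∀ i j : ZMod 2,
          ∀ p ∈ (M₂.gr i).prod ((M₁.gr i).prod ((M₂.gr (i + 1)).dualAnnihilator)),
          ∀ q ∈ (M₂.gr j).prod ((M₁.gr j).prod ((M₂.gr (j + 1)).dualAnnihilator)),
          muld p q ∈ (M₂.gr (i+j)).prod
            ((M₁.gr (i+j)).prod ((M₂.gr (i + j + 1)).dualAnnihilator)) := by
        intro i j p hp q hq
        rw [hmuld i j p hp q hq]
        simp only [Submodule.mem_prod] at hp hq ⊢
        refine ⟨M₂.mul_mem i j p.1 hp.1 q.1 hq.1, ?_, ?_⟩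
        · exact add_mem (add_mem (M₁.mul_mem i j p.2.1 hp.2.1 q.2.1 hq.2.1)
            (hrep.even i j p.1 hp.1 q.2.1 hq.2.1))
            (Submodule.smul_mem _ _ (add_comm j i ▸ hrep.even j i q.1 hq.1 p.2.1 hp.2.1))
        · exact hdualmem i j p.1 hp.1 p.2.1 hp.2.1 p.2.2 hp.2.2 q.1 hq.1 q.2.1 hq.2.1
            q.2.2 hq.2.2
      rw [hmuld i j (a,x,f) hp' (b,y,g) hq', hmuld j k (b,y,g) hq' (c,z,h) hr']
      rw [hBtil (i+j) k _ (by
          have := hmulmem i j (a,x,f) hp' (b,y,g) hq'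
          rwa [hmuld i j (a,x,f) hp' (b,y,g) hq'] at this) (c,z,h) hr']
      rw [hBtil i (j+k) (a,x,f) hp' _ (by
          have := hmulmem j k (b,y,g) hq' (c,z,h) hr'
          rwa [hmuld j k (b,y,g) hq' (c,z,h) hr'] at this)]
      dsimp only
      rw [hLstar₂ i j a ha g hg, hLstar₂ j i b hb f hf, hLstar₂ j k b hb h hh,
        hLstar₂ k j c hc g hg]
      simp only [map_add, map_smul, LinearMap.add_apply, LinearMap.smul_apply,
        LinearMap.comp_apply, smul_eq_mul]
      rw [hvphi i j k x hx y hy c hc, hvphi j k i y hy z hz a ha]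
      rw [hPE.invariant x y z, hσinv a b c]
      rw [hsym i j a ha y hy z, hsym j i b hb x hx z]
      rw [hPE.supersym j (k+i) y hy (φ c x) (hrep.even k i c hc x hx)]
      rw [hsym k i c hc x hx y]
      rw [hPE.supersym k (i+j) z hz (φ a y) (hrep.even i j a ha y hy)]
      rw [M₂.supercomm k i c hc a ha, M₂.supercomm j i b hb a ha]
      simp only [map_smul, smul_eq_mul]
      rw [hsym i j a ha y hy z]
      generalize (B x) ((M₁.mul y) z) = A1
      generalize (σ a) ((M₂.mul b) c) = A2
      generalize (B y) ((φ a) z) = A3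
      generalize (B x) ((φ b) z) = A4
      generalize (B x) ((φ c) y) = A5
      generalize g ((M₂.mul a) c) = A6
      generalize f ((M₂.mul b) c) = A7
      generalize h ((M₂.mul a) b) = A8
      clear * - A1 A2 A3 A4 A5 A6 A7 A8 i j k
      have h2 : ∀ i : ZMod 2, i = 0 ∨ i = 1 := by decide
      rcases h2 i with rfl | rfl <;> rcases h2 j with rfl | rfl <;> rcases h2 k with rfl | rfl <;>
        norm_num [show ((2:ZMod 2)).val = 0 from rfl, show ((1:ZMod 2)).val = 1 from rfl,
          show ((0:ZMod 2)).val = 0 from rfl] <;> ring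
    have hsup2 : M₂.gr 0 ⊔ M₂.gr 1 = ⊤ := M₂.compl.sup_eq_top
    have hsup1 : M₁.gr 0 ⊔ M₁.gr 1 = ⊤ := M₁.compl.sup_eq_top
    have hsupd : (M₂.gr 1).dualAnnihilator ⊔ (M₂.gr 0).dualAnnihilator = ⊤ := by
      rw [← Subspace.dualAnnihilator_inf_eq, inf_comm, M₂.compl.inf_eq_bot,
        Submodule.dualAnnihilator_bot]
    have hdec : ∀ p : J₂ × J₁ × Module.Dual K J₂,
        ∃ p0 ∈ (M₂.gr 0).prod ((M₁.gr 0).prod ((M₂.gr (0 + 1)).dualAnnihilator)),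
        ∃ p1 ∈ (M₂.gr 1).prod ((M₁.gr 1).prod ((M₂.gr (1 + 1)).dualAnnihilator)),
        p = p0 + p1 := by
      rintro ⟨a, x, f⟩
      obtain ⟨a0, ha0, a1, ha1, hA⟩ :=
        Submodule.mem_sup.mp (hsup2 ▸ (Submodule.mem_top : a ∈ (⊤ : Submodule K J₂)))
      obtain ⟨x0, hx0, x1, hx1, hX⟩ :=
        Submodule.mem_sup.mp (hsup1 ▸ (Submodule.mem_top : x ∈ (⊤ : Submodule K J₁)))
      obtain ⟨f0, hf0, f1, hf1, hF⟩ :=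
        Submodule.mem_sup.mp (hsupd ▸ (Submodule.mem_top :
          f ∈ (⊤ : Submodule K (Module.Dual K J₂))))
      refine ⟨(a0, x0, f0), ?_, (a1, x1, f1), ?_, ?_⟩
      · exact Submodule.mem_prod.mpr ⟨ha0, Submodule.mem_prod.mpr ⟨hx0, hf0⟩⟩
      · exact Submodule.mem_prod.mpr ⟨ha1, Submodule.mem_prod.mpr ⟨hx1, hf1⟩⟩
      · simp only [Prod.mk_add_mk, Prod.mk.injEq]
        exact ⟨hA.symm, hX.symm, hF.symm⟩
    intro p q r
    obtain ⟨p0, hp0, p1, hp1, rfl⟩ := hdec p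
    obtain ⟨q0, hq0, q1, hq1, rfl⟩ := hdec q
    obtain ⟨r0, hr0, r1, hr1, rfl⟩ := hdec r
    simp only [map_add, LinearMap.add_apply]
    rw [key 0 0 0 p0 hp0 q0 hq0 r0 hr0, key 0 0 1 p0 hp0 q0 hq0 r1 hr1,
        key 0 1 0 p0 hp0 q1 hq1 r0 hr0, key 0 1 1 p0 hp0 q1 hq1 r1 hr1,
        key 1 0 0 p1 hp1 q0 hq0 r0 hr0, key 1 0 1 p1 hp1 q0 hq0 r1 hr1,
        key 1 1 0 p1 hp1 q1 hq1 r0 hr0, key 1 1 1 p1 hp1 q1 hq1 r1 hr1]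
end
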